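/- arXiv:1911.09897 — 5 statements merged into one kernel-verified Lean document; each statement's English description precedes it below -/
import Mathlib

section
/- Let K ≥ 2 and let LY(σ_K) ⊆ Σ_K × Σ_K be the set of Li–Yorke pairs of the shift σ_K. Then dim_H LY(σ_K) = 2 and the 2-dimensional Hausdorff measure of LY(σ_K) equals 1. -/
open Filter Set MeasureTheory Topology TopologicalSpace

noncomputable section

/-- The symbolic space `Σ_K` on `K` symbols: sequences `ℕ → Fin K`. -/
def SymbSp (K : ℕ) : Type := ℕ → Fin K

namespace SymbSp

variable {K : ℕ}

theorem exists_ne {x y : SymbSp K} (h : ¬x = y) : ∃ i, x i ≠ y i := by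
  by_contra hc
  push_neg at hc
  exact h (funext hc)

open Classical in
/-- The metric `ρ(x,y) = K^{-δ(x,y)}` on `Σ_K`. -/
def sdist (x y : SymbSp K) : ℝ :=
  if h : x = y then 0 else ((K : ℝ))⁻¹ ^ Nat.find (exists_ne h)

theorem sdist_self (x : SymbSp K) : sdist x x = 0 := by
  unfold sdist
  exact dif_pos rfl

open Classical in
theorem sdist_eq {x y : SymbSp K} (h : ¬x = y) :
    sdist x y = ((K : ℝ))⁻¹ ^ Nat.find (exists_ne h) := by
  unfold sdist
  exact dif_neg h

theorem sdist_nonneg' (x y : SymbSp K) : 0 ≤ sdist x y := by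
  unfold sdist
  split
  · exact le_rfl
  · positivity

theorem inv_cast_le_one (K : ℕ) : ((K : ℝ))⁻¹ ≤ 1 := by
  rcases Nat.eq_zero_or_pos K with h | h
  · simp [h]
  · exact inv_le_one_of_one_le₀ (by exact_mod_cast h)

open Classical in
theorem eq_of_lt_find {x y : SymbSp K} (h : ¬x = y) {i : ℕ}
    (hi : i < Nat.find (exists_ne h)) : x i = y i :=
  not_not.mp (Nat.find_min (exists_ne h) hi)

open Classical in
theorem sdist_le_of_agree {x y : SymbSp K} {n : ℕ} (h : ∀ i < n, x i = y i) :
    sdist x y ≤ ((K : ℝ))⁻¹ ^ n := by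
  by_cases hxy : x = y
  · rw [hxy, sdist_self]; positivity
  · rw [sdist_eq hxy]
    apply pow_le_pow_of_le_one (by positivity) (inv_cast_le_one K)
    rw [Nat.le_find_iff]
    intro m hm
    simp only [ne_eq, not_not]
    exact h m hm

open Classical in
theorem sdist_comm (x y :  SymbSp K) : sdist x y = sdist y x := by
  by_cases h : x = y
  · rw [h]
  · rw [sdist_eq h, sdist_eq (fun hyx => h hyx.symm)]
    congr 1
    exact le_antisymm (Nat.find_mono fun n hn => hn.symm)
      (Nat.find_mono fun n hn => hn.symm)

open Classical in
theorem sdist_le_max (x y z : SymbSp K) : sdist x z ≤ max (sdist x y) (sdist y z) := by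
  by_cases hxz : x = z
  · rw [hxz, sdist_self]
    exact le_max_of_le_left (sdist_nonneg' _ _)
  by_cases hxy : x = y
  · rw [hxy]; exact le_max_right _ _
  by_cases hyz : y = z
  · rw [← hyz]; exact le_max_left _ _
  rcases le_total (Nat.find (exists_ne hxy)) (Nat.find (exists_ne hyz)) with hle | hle
  · refine le_max_of_le_left ?_
    rw [sdist_eq hxy]
    exact sdist_le_of_agree fun i hi =>
      (eq_of_lt_find hxy hi).trans (eq_of_lt_find hyz (lt_of_lt_of_le hi hle))
  · refine le_max_of_le_right ?_
    rw [sdist_eq hyz]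
    exact sdist_le_of_agree fun i hi =>
      (eq_of_lt_find hxy (lt_of_lt_of_le hi hle)).trans (eq_of_lt_find hyz hi)

theorem eq_of_sdist_eq_zero {x y : SymbSp K} (h : sdist x y = 0) : x = y := by
  by_contra hxy
  rw [sdist_eq hxy] at h
  have hK : (0 : ℝ) < (K : ℝ) := by exact_mod_cast Fin.pos (x 0)
  exact absurd h (ne_of_gt (pow_pos (inv_pos.mpr hK) _))

instance : MetricSpace (SymbSp K) where
  dist := sdist
  dist_self := sdist_self
  dist_comm := sdist_comm
  dist_triangle x y z :=
    (sdist_le_max x y z).trans (max_le_add_of_nonneg (sdist_nonneg' _ _) (sdist_nonneg' _ _))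
  eq_of_dist_eq_zero := fun h => eq_of_sdist_eq_zero h

instance : MeasurableSpace (SymbSp K) := borel _

instance : BorelSpace (SymbSp K) := ⟨rfl⟩

instance : SeparableSpace (SymbSp K) := by
  obtain hK | hK | hK : K = 0 ∨ K = 1 ∨ 2 ≤ K := by omega
  · subst hK
    haveI : IsEmpty (SymbSp 0) := ⟨fun x => (x 0).elim0⟩
    exact ⟨⟨Set.univ, Set.countable_univ, dense_univ⟩⟩
  · subst hK
    haveI : Subsingleton (SymbSp 1) := ⟨fun x y => funext fun i => Subsingleton.elim _ _⟩
    exact ⟨⟨Set.univ, Set.countable_univ, dense_univ⟩⟩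
  · refine ⟨⟨Set.range (fun w : (Σ n : ℕ, (Fin n → Fin K)) =>
      (fun i => if h : i < w.1 then w.2 ⟨i, h⟩ else ⟨0, by omega⟩ : SymbSp K)),
      Set.countable_range _, ?_⟩⟩
    rw [Metric.dense_iff]
    intro x r hr
    obtain ⟨n, hn⟩ : ∃ n : ℕ, ((K : ℝ))⁻¹ ^ n < r :=
      exists_pow_lt_of_lt_one hr (inv_lt_one_of_one_lt₀ (by exact_mod_cast hK))
    refine ⟨(fun i => if h : i < n then x i else ⟨0, by omega⟩ : SymbSp K),
      ?_, ⟨⟨n, fun j => x j⟩, rfl⟩⟩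
    show sdist _ x < r
    exact lt_of_le_of_lt (sdist_le_of_agree fun i hi => dif_pos hi) hn

instance : SecondCountableTopology (SymbSp K) :=
  UniformSpace.secondCountable_of_separable _

end SymbSp

/-- The shift map `σ_K` on `Σ_K`. -/
def shift (K : ℕ) : SymbSp K → SymbSp K := fun x i => x (i + 1)

end
/-- The set of Li–Yorke pairs of `σ_K`. -/
def LYset (K : ℕ) : Set (SymbSp K × SymbSp K) :=
  {z | Filter.liminf (fun i : ℕ => dist ((shift K)^[i] z.1) ((shift K)^[i] z.2))
          Filter.atTop = 0 ∧
       0 < Filter.limsup (fun i : ℕ => dist ((shift K)^[i] z.1) ((shift K)^[i] z.2))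
          Filter.atTop}

/-! Read a pair of sequences as one sequence over the alphabet `Fin K × Fin K`. Its cylinders
of length `n` have diameter at most `K⁻¹ ^ n` and there are `K ^ (2 * n)` of them, so `μH[2]` of the
whole space is at most `1`; the `1`-Lipschitz map `(x, y) ↦ (0.x, 0.y)` onto the unit square
gives the reverse bound. A pair that is not Li–Yorke is either eventually equal, or for some
`L` it has no `L` consecutive agreements after some point. Either way, from some position `N`
on, every aligned block of length `L` avoids one of the `K ^ (2 * L)` possible words, and
counting cylinders shows that such pairs form a `μH[2]`-null set. -/

open scoped ENNReal

namespace SymbSp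

variable {K : ℕ}

lemma iterate_shift_apply (x : SymbSp K) (i j : ℕ) : (shift K)^[i] x j = x (i + j) := by
  induction i generalizing x with
  | zero => simp
  | succ i ih =>
    rw [Function.iterate_succ_apply, ih]
    simp only [shift]
    ring_nf

lemma dist_le_one (x y : SymbSp K) : dist x y ≤ 1 :=
  (sdist_le_of_agree (n := 0) (by simp)).trans_eq (pow_zero _)

open Classical in
lemma dist_eq_one_of_apply_zero_ne {x y : SymbSp K} (h : x 0 ≠ y 0) : dist x y = 1 := by
  have hxy : x ≠ y := fun e => h (congrFun e 0)
  change sdist x y = 1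
  rw [sdist_eq hxy, (Nat.find_eq_zero (exists_ne hxy)).2 h, pow_zero]

lemma edist_le_inv_pow_of_agree (hK : 0 < K) {x y : SymbSp K} {n : ℕ} (h : ∀ i < n, x i = y i) :
    edist x y ≤ (K : ℝ≥0∞)⁻¹ ^ n := by
  rw [edist_dist, ← ENNReal.ofReal_natCast, ← ENNReal.ofReal_inv_of_pos (by positivity),
    ← ENNReal.ofReal_pow (by positivity)]
  exact ENNReal.ofReal_le_ofReal (sdist_le_of_agree h)

lemma lipschitzWith_ofDigits : LipschitzWith 1 fun x : SymbSp K => Real.ofDigits x := by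
  refine LipschitzWith.of_dist_le_mul fun x y => ?_
  by_cases hxy : x = y
  · simp [hxy]
  classical
  change |_| ≤ 1 * sdist x y
  rw [sdist_eq hxy, one_mul, inv_pow]
  exact Real.abs_ofDigits_sub_ofDigits_le fun i hi => eq_of_lt_find hxy hi

def window (z : SymbSp K × SymbSp K) (p L : ℕ) : Fin L → Fin K × Fin K :=
  fun l => (z.1 (p + l), z.2 (p + l))

def cylinder {n : ℕ} (w : Fin n → Fin K × Fin K) : Set (SymbSp K × SymbSp K) :=
  {z | window z 0 n = w}

lemma ediam_cylinder_le (hK : 0 < K) {n : ℕ} (w : Fin n → Fin K × Fin K) :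
    Metric.ediam (cylinder w) ≤ (K : ℝ≥0∞)⁻¹ ^ n := by
  refine Metric.ediam_le fun z hz z' hz' => ?_
  have h i (hi : i < n) : (z.1 i, z.2 i) = (z'.1 i, z'.2 i) := by
    simpa [window] using (congrFun hz ⟨i, hi⟩).trans (congrFun hz' ⟨i, hi⟩).symm
  rw [Prod.edist_eq]
  exact max_le (edist_le_inv_pow_of_agree hK fun i hi => (Prod.ext_iff.1 (h i hi)).1)
    (edist_le_inv_pow_of_agree hK fun i hi => (Prod.ext_iff.1 (h i hi)).2)

lemma natCast_mul_self_pow_mul_inv_pow (hK : K ≠ 0) (n : ℕ) :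
    (((K * K) ^ n : ℕ) : ℝ≥0∞) * (K : ℝ≥0∞)⁻¹ ^ (2 * n) = 1 := by
  have hKK : (K : ℝ≥0∞) * (K : ℝ≥0∞)⁻¹ = 1 :=
    ENNReal.mul_inv_cancel (by exact_mod_cast hK) (ENNReal.natCast_ne_top K)
  calc _ = ((K : ℝ≥0∞) * (K : ℝ≥0∞)⁻¹) ^ (2 * n) := by push_cast; ring
    _ = 1 := by rw [hKK, one_pow]

theorem hausdorffMeasure_two_le_liminf_card (hK : 1 < K) {s : Set (SymbSp K × SymbSp K)}
    {n : ℕ → ℕ} (hn : Tendsto n atTop atTop) {ι : ℕ → Type*} [∀ m, Fintype (ι m)]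
    (w : ∀ m, ι m → Fin (n m) → Fin K × Fin K) (hs : ∀ m, s ⊆ ⋃ i, cylinder (w m i)) :
    μH[2] s ≤
      liminf (fun m => (Fintype.card (ι m) : ℝ≥0∞) * (K : ℝ≥0∞)⁻¹ ^ (2 * n m)) atTop := by
  have hr : Tendsto (fun m => (K : ℝ≥0∞)⁻¹ ^ n m) atTop (𝓝 0) :=
    (ENNReal.tendsto_pow_atTop_nhds_zero_of_lt_one
      (ENNReal.inv_lt_one.2 (by exact_mod_cast hK))).comp hn
  refine (Measure.hausdorffMeasure_le_liminf_sum 2 s _ hr (fun m i => cylinder (w m i))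
    (.of_forall fun m i => ediam_cylinder_le (by omega) _) (.of_forall hs)).trans
    (liminf_le_liminf (.of_forall fun m => ?_))
  calc ∑ i, Metric.ediam (cylinder (w m i)) ^ (2 : ℝ)
      ≤ ∑ _i : ι m, ((K : ℝ≥0∞)⁻¹ ^ n m) ^ (2 : ℝ) :=
        Finset.sum_le_sum fun i _ =>
          ENNReal.rpow_le_rpow (ediam_cylinder_le (by omega) _) (by norm_num)
    _ = _ := by simp [← pow_mul, mul_comm]

theorem hausdorffMeasure_univ_le_one (hK : 1 < K) :
    μH[2] (univ : Set (SymbSp K × SymbSp K)) ≤ 1 := by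
  refine (hausdorffMeasure_two_le_liminf_card hK tendsto_id
    (ι := fun n => Fin n → Fin K × Fin K) (fun _ w => w)
    fun n z _ => mem_iUnion.2 ⟨window z 0 n, rfl⟩).trans_eq ?_
  simp only [Fintype.card_fun, Fintype.card_prod, Fintype.card_fin, id_eq]
  simp_rw [natCast_mul_self_pow_mul_inv_pow (by omega : K ≠ 0)]
  exact liminf_const 1

theorem one_le_hausdorffMeasure_univ (hK : 1 < K) :
    1 ≤ μH[2] (univ : Set (SymbSp K × SymbSp K)) := by
  have hF :
      LipschitzWith 1 fun z : SymbSp K × SymbSp K => (Real.ofDigits z.1, Real.ofDigits z.2) := by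
    simpa using (lipschitzWith_ofDigits.comp LipschitzWith.prod_fst).prodMk
      (lipschitzWith_ofDigits.comp LipschitzWith.prod_snd)
  have hsurj : Icc (0 : ℝ) 1 ×ˢ Icc (0 : ℝ) 1 ⊆
      (fun z : SymbSp K × SymbSp K => (Real.ofDigits z.1, Real.ofDigits z.2)) '' univ := by
    rintro ⟨a, b⟩ ⟨ha, hb⟩
    obtain ⟨x, -, rfl⟩ := Real.ofDigits_SurjOn hK ha
    obtain ⟨y, -, rfl⟩ := Real.ofDigits_SurjOn hK hb
    exact ⟨(x, y), trivial, rfl⟩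
  calc (1 : ℝ≥0∞) = volume (Icc (0 : ℝ) 1 ×ˢ Icc (0 : ℝ) 1) := by
        rw [Measure.volume_eq_prod, Measure.prod_prod]
        simp
    _ = μH[2] (Icc (0 : ℝ) 1 ×ˢ Icc (0 : ℝ) 1) := by rw [hausdorffMeasure_prod_real]
    _ ≤ μH[2] _ := measure_mono hsurj
    _ ≤ μH[2] univ := by simpa using hF.hausdorffMeasure_image_le zero_le_two univ

def blockSet (N L : ℕ) (T : Finset (Fin L → Fin K × Fin K)) : Set (SymbSp K × SymbSp K) :=
  {z | ∀ j, window z (N + j * L) L ∈ T}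

def concatBlocks {α : Type*} {N L m : ℕ} (u : Fin N → α) (b : Fin m → Fin L → α) :
    Fin (N + m * L) → α :=
  Fin.append u fun i => b (finProdFinEquiv.symm i).1 (finProdFinEquiv.symm i).2

lemma window_zero_eq_concatBlocks (z : SymbSp K × SymbSp K) (N L m : ℕ) :
    window z 0 (N + m * L) =
      concatBlocks (window z 0 N) fun j : Fin m => window z (N + j * L) L := by
  funext i
  refine Fin.addCases (fun a => ?_) (fun b => ?_) i
  · simp [concatBlocks, window]
  · obtain ⟨⟨j, l⟩, rfl⟩ := finProdFinEquiv.surjective b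
    simp only [concatBlocks, Fin.append_right, Equiv.symm_apply_apply, window]
    simp only [finProdFinEquiv_apply_val, Fin.natAdd, zero_add]
    ring_nf

lemma blockSet_subset_iUnion_cylinder (N L m : ℕ) (T : Finset (Fin L → Fin K × Fin K)) :
    blockSet N L T ⊆
      ⋃ p : (Fin N → Fin K × Fin K) × (Fin m → T),
        cylinder (concatBlocks p.1 fun j => (p.2 j : Fin L → Fin K × Fin K)) :=
  fun z hz => mem_iUnion.2
    ⟨(window z 0 N, fun j => ⟨_, hz j⟩), window_zero_eq_concatBlocks z N L m⟩

theorem hausdorffMeasure_blockSet_eq_zero (hK : 1 < K) {L : ℕ} (hL : 0 < L) (N : ℕ)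
    {T : Finset (Fin L → Fin K × Fin K)} (hT : T.card < (K * K) ^ L) :
    μH[2] (blockSet N L T) = 0 := by
  have hK0 : K ≠ 0 := by omega
  set c : ℝ≥0∞ := T.card * (K : ℝ≥0∞)⁻¹ ^ (2 * L)
  have hc : c < 1 := by
    rw [← natCast_mul_self_pow_mul_inv_pow hK0 L]
    exact ENNReal.mul_lt_mul_left
      (pow_ne_zero _ (ENNReal.inv_ne_zero.2 (ENNReal.natCast_ne_top K))) (by simp [hK0])
      (by exact_mod_cast hT)
  have hcard (m : ℕ) : (Fintype.card ((Fin N → Fin K × Fin K) × (Fin m → T)) : ℝ≥0∞) *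
      (K : ℝ≥0∞)⁻¹ ^ (2 * (N + m * L)) = c ^ m := by
    simp only [Fintype.card_prod, Fintype.card_fun, Fintype.card_fin, Fintype.card_coe]
    calc _ = ((((K * K) ^ N : ℕ) : ℝ≥0∞) * (K : ℝ≥0∞)⁻¹ ^ (2 * N)) * c ^ m := by
          simp only [c]; push_cast; ring
      _ = c ^ m := by rw [natCast_mul_self_pow_mul_inv_pow hK0, one_mul]
  refine le_antisymm ?_ zero_le
  refine (hausdorffMeasure_two_le_liminf_card hK (n := fun m => N + m * L) ?_ _
    (fun m => blockSet_subset_iUnion_cylinder N L m T)).trans ?_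
  · exact tendsto_atTop_mono (fun m => le_add_left (Nat.le_mul_of_pos_right m hL)) tendsto_id
  · simp_rw [hcard]
    exact (ENNReal.tendsto_pow_atTop_nhds_zero_of_lt_one hc).liminf_eq.le

def diagWords (K L : ℕ) : Finset (Fin L → Fin K × Fin K) :=
  Finset.univ.filter fun w => ∀ l, (w l).1 = (w l).2

lemma card_diagWords_lt (hK : 1 < K) {L : ℕ} (hL : 0 < L) :
    (diagWords K L).card < (K * K) ^ L := by
  calc (diagWords K L).card ≤ (Finset.univ : Finset (Fin L → Fin K)).card :=
        Finset.card_le_card_of_injOn (fun w l => (w l).1) (fun _ _ => Finset.mem_univ _)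
          fun w hw w' hw' h => funext fun l => Prod.ext (congrFun h l) <| by
            simpa [diagWords, ← (Finset.mem_filter.1 hw).2 l, ← (Finset.mem_filter.1 hw').2 l]
              using congrFun h l
    _ = K ^ L := by simp
    _ < (K * K) ^ L := Nat.pow_lt_pow_left (by nlinarith) hL.ne'

lemma card_compl_diagWords_lt (hK : 0 < K) (L : ℕ) : (diagWords K L)ᶜ.card < (K * K) ^ L := by
  have h := (Finset.card_compl_lt_iff_nonempty (diagWords K L)).2
    ⟨fun _ => (⟨0, hK⟩, ⟨0, hK⟩), by simp [diagWords]⟩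
  simpa using h

theorem mem_LYset_of_frequently (hK : 1 < K) {z : SymbSp K × SymbSp K}
    (hne : ∃ᶠ i in atTop, z.1 i ≠ z.2 i)
    (hagree : ∀ L, ∃ᶠ i in atTop, ∀ j < L, z.1 (i + j) = z.2 (i + j)) : z ∈ LYset K := by
  set f : ℕ → ℝ := fun i => dist ((shift K)^[i] z.1) ((shift K)^[i] z.2)
  have hbdd_above : IsBoundedUnder (· ≤ ·) atTop f :=
    isBoundedUnder_of ⟨1, fun _ => dist_le_one _ _⟩
  have hbdd_below : IsBoundedUnder (· ≥ ·) atTop f :=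
    isBoundedUnder_of ⟨0, fun _ => dist_nonneg⟩
  have hliminf_le (L : ℕ) : liminf f atTop ≤ (K : ℝ)⁻¹ ^ L :=
    liminf_le_of_frequently_le ((hagree L).mono fun i hi =>
      sdist_le_of_agree fun j hj => by simpa [iterate_shift_apply] using hi j hj) hbdd_below
  have hone_le : 1 ≤ limsup f atTop :=
    le_limsup_of_frequently_le (hne.mono fun i hi =>
      (dist_eq_one_of_apply_zero_ne (by simpa [iterate_shift_apply] using hi)).ge) hbdd_above
  refine ⟨le_antisymm ?_ (le_liminf_of_le hbdd_above.isCoboundedUnder_ge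
    (.of_forall fun _ => dist_nonneg)), zero_lt_one.trans_le hone_le⟩
  exact ge_of_tendsto (tendsto_pow_atTop_nhds_zero_of_lt_one (by positivity)
    (inv_lt_one_of_one_lt₀ (by exact_mod_cast hK))) (.of_forall hliminf_le)

theorem compl_LYset_subset (hK : 1 < K) :
    (LYset K)ᶜ ⊆ (⋃ N, blockSet N 1 (diagWords K 1)) ∪
      ⋃ N, ⋃ L, blockSet N (L + 1) (diagWords K (L + 1))ᶜ := by
  intro z hz
  by_contra h
  simp only [mem_union, mem_iUnion, not_or, not_exists, blockSet, mem_ofPred_eq, not_forall,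
    Finset.mem_compl, not_not, diagWords, Finset.mem_filter, Finset.mem_univ, true_and,
    window] at h
  refine hz (mem_LYset_of_frequently hK (frequently_atTop.2 fun N => ?_)
    fun L => frequently_atTop.2 fun N => ?_)
  · obtain ⟨j, l, hl⟩ := h.1 N
    exact ⟨_, by omega, hl⟩
  · obtain ⟨j, hj⟩ := h.2 N L
    exact ⟨N + j * (L + 1), by omega, fun i hi => hj ⟨i, by omega⟩⟩

theorem hausdorffMeasure_compl_LYset (hK : 1 < K) : μH[2] (LYset K)ᶜ = 0 := by
  refine measure_mono_null (compl_LYset_subset hK) (measure_union_null ?_ ?_)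
  · exact measure_iUnion_null fun N =>
      hausdorffMeasure_blockSet_eq_zero hK one_pos N (card_diagWords_lt hK one_pos)
  · exact measure_iUnion_null fun N => measure_iUnion_null fun L =>
      hausdorffMeasure_blockSet_eq_zero hK L.succ_pos N (card_compl_diagWords_lt (by omega) _)

theorem hausdorffMeasure_LYset (hK : 1 < K) : μH[2] (LYset K) = 1 := by
  have h := measure_sdiff_null (μ := μH[2]) (s := univ) (hausdorffMeasure_compl_LYset hK)
  rw [sdiff_compl, univ_inter] at h
  rw [h]
  exact le_antisymm (hausdorffMeasure_univ_le_one hK) (one_le_hausdorffMeasure_univ hK)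

end SymbSp

/-- For `K ≥ 2`, the set of Li–Yorke pairs of `σ_K` has Hausdorff
dimension `2` and its `2`-dimensional Hausdorff measure equals `1`. -/
theorem statement_2 (K : ℕ) (hK : 2 ≤ K) :
    dimH (LYset K) = 2 ∧ μH[2] (LYset K) = 1 := by
  have hμ : μH[((2 : NNReal) : ℝ)] (LYset K) = 1 := mod_cast SymbSp.hausdorffMeasure_LYset hK
  refine ⟨?_, by simpa using hμ⟩
  exact (dimH_of_hausdorffMeasure_ne_zero_ne_top (hμ ▸ one_ne_zero)
    (hμ ▸ ENNReal.one_ne_top)).trans (by norm_num)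
end

section
/- Let (X,ρ) be a compact metric space, f : X → X a continuous surjection, n ≥ 1 an integer, and [p,q] a compact subinterval of [0,1]. Then E_{f^n}([p,q]) = E_f([p,q]) and D_{f^n}([p,q]) = D_f([p,q]). -/
noncomputable section DistChaos

variable {X : Type*} [MetricSpace X]

/-- The lower distributional function `F_{x,y}(ε)`. -/
def lowF (f : X → X) (x y : X) (ε : ℝ) : ℝ :=
  Filter.liminf (fun n : ℕ =>
    (((Finset.range n).filter fun i => dist (f^[i] x) (f^[i] y) < ε).card : ℝ) / n)
    Filter.atTop

/-- The upper distributional function `F*_{x,y}(ε)`. -/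
def uppF (f : X → X) (x y : X) (ε : ℝ) : ℝ :=
  Filter.limsup (fun n : ℕ =>
    (((Finset.range n).filter fun i => dist (f^[i] x) (f^[i] y) < ε).card : ℝ) / n)
    Filter.atTop

/-- The set `E_f([p,q])`. -/
def Eset (f : X → X) (p q : ℝ) : Set (X × X) :=
  {z | Filter.Tendsto (fun ε => lowF f z.1 z.2 ε) (nhdsWithin 0 (Set.Ioi 0)) (nhds p) ∧
       Filter.Tendsto (fun ε => uppF f z.1 z.2 ε) (nhdsWithin 0 (Set.Ioi 0)) (nhds q)}

/-- The set `D_f([p,q])`. -/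
def Dset (f : X → X) (p q : ℝ) : Set (X × X) :=
  {z | ∃ ε₀ > 0, ∀ ε : ℝ, 0 < ε → ε ≤ ε₀ →
        lowF f z.1 z.2 ε = p ∧ uppF f z.1 z.2 ε = q}

end DistChaos

/-
By uniform continuity, for every `ε > 0` there is `δ ≤ ε` such that `δ`-close points stay
`ε`-close during `n` steps of `f`. A `δ`-close time `j` of `f^[n]` then gives the `n`
consecutive `ε`-close times `n j, …, n j + n - 1` of `f`, while a `δ`-close time `i` of `f`
gives the `ε`-close time `i / n + 1` of `f^[n]`, hit by at most `n` values of `i`. Comparing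
frequencies at times `N` and `N / n` yields `F_{f^n}(δ) ≤ F_f(ε)`, `F_f(δ) ≤ F_{f^n}(ε)` and the
same for `F*`. Two nondecreasing functions interleaved in this way have the same limit at `0+`,
and one is eventually equal to `p` if and only if the other is.
-/

open Filter Topology

section Interleaved

def Interleaved (g h : ℝ → ℝ) : Prop :=
  ∀ ε > 0, ∃ δ ∈ Set.Ioc 0 ε, g δ ≤ h ε ∧ h δ ≤ g ε

variable {g h : ℝ → ℝ} {p : ℝ}

lemma Interleaved.symm (hgh : Interleaved g h) : Interleaved h g := fun ε hε =>
  (hgh ε hε).imp fun _ ⟨hδ, h₁, h₂⟩ => ⟨hδ, h₂, h₁⟩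

lemma Monotone.le_of_tendsto_nhdsGT (hg : Monotone g) (hlim : Tendsto g (𝓝[>] 0) (𝓝 p))
    {ε : ℝ} (hε : 0 < ε) : p ≤ g ε :=
  _root_.le_of_tendsto hlim <| mem_of_superset (Ioc_mem_nhdsGT hε) fun _ ht => hg ht.2

lemma Interleaved.tendsto (hgh : Interleaved g h) (hg : Monotone g) (hh : Monotone h)
    (hlim : Tendsto g (𝓝[>] 0) (𝓝 p)) : Tendsto h (𝓝[>] 0) (𝓝 p) := by
  refine tendsto_order.2 ⟨fun a ha => ?_, fun a ha => ?_⟩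
  · refine eventually_nhdsWithin_of_forall fun ε (hε : 0 < ε) => ha.trans_le ?_
    obtain ⟨δ, hδ, hgδ, -⟩ := hgh ε hε
    exact (hg.le_of_tendsto_nhdsGT hlim hδ.1).trans hgδ
  · obtain ⟨ε, hga, hε⟩ := ((hlim.eventually (gt_mem_nhds ha)).and self_mem_nhdsWithin).exists
    obtain ⟨δ, hδ, -, hhg⟩ := hgh ε hε
    exact mem_of_superset (Ioc_mem_nhdsGT hδ.1) fun t ht => ((hh ht.2).trans hhg).trans_lt hga

lemma Interleaved.tendsto_iff (hgh : Interleaved g h) (hg : Monotone g) (hh : Monotone h) :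
    Tendsto g (𝓝[>] 0) (𝓝 p) ↔ Tendsto h (𝓝[>] 0) (𝓝 p) :=
  ⟨hgh.tendsto hg hh, hgh.symm.tendsto hh hg⟩

lemma Interleaved.eventually_eq (hgh : Interleaved g h) (hh : Monotone h)
    (hg : ∀ᶠ ε in 𝓝[>] 0, g ε = p) : ∀ᶠ ε in 𝓝[>] 0, h ε = p := by
  obtain ⟨ε₀, hε₀, hgε₀⟩ := (nhdsGT_basis (0 : ℝ)).eventually_iff.1 hg
  obtain ⟨δ₀, hδ₀, -, hhg⟩ := hgh (ε₀ / 2) (half_pos hε₀)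
  refine mem_of_superset (Ioc_mem_nhdsGT hδ₀.1) fun t ht => le_antisymm ?_ ?_
  · calc h t ≤ h δ₀ := hh ht.2
      _ ≤ g (ε₀ / 2) := hhg
      _ = p := hgε₀ ⟨half_pos hε₀, half_lt_self hε₀⟩
  · obtain ⟨δ, hδ, hgδ, -⟩ := hgh t ht.1
    calc p = g δ := (hgε₀ ⟨hδ.1, by linarith [hδ.2, ht.2, hδ₀.2]⟩).symm
      _ ≤ h t := hgδ

lemma Interleaved.eventually_eq_iff (hgh : Interleaved g h) (hg : Monotone g) (hh : Monotone h) :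
    (∀ᶠ ε in 𝓝[>] 0, g ε = p) ↔ ∀ᶠ ε in 𝓝[>] 0, h ε = p :=
  ⟨hgh.eventually_eq hh, hgh.symm.eventually_eq hg⟩

end Interleaved

section LiminfLimsup

variable {ι : Type*} {l : Filter ι} [l.NeBot] {u v e : ι → ℝ}

lemma liminf_le_liminf_of_le_add_of_tendsto_zero (hu : IsBoundedUnder (· ≥ ·) l u)
    (hv : IsBoundedUnder (· ≤ ·) l v) (hv' : IsBoundedUnder (· ≥ ·) l v)
    (he : Tendsto e l (𝓝 0)) (h : ∀ᶠ i in l, u i ≤ v i + e i) : liminf u l ≤ liminf v l :=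
  calc liminf u l ≤ liminf (e + v) l :=
        liminf_le_liminf (h.mono fun i hi => hi.trans_eq (add_comm _ _)) hu
          (isBoundedUnder_le_add he.isBoundedUnder_le hv).isCoboundedUnder_ge
    _ ≤ limsup e l + liminf v l :=
        liminf_add_le he.isBoundedUnder_ge he.isBoundedUnder_le hv' hv.isCoboundedUnder_ge
    _ = liminf v l := by rw [he.limsup_eq, zero_add]

lemma limsup_le_limsup_of_le_add_of_tendsto_zero (hu : IsBoundedUnder (· ≥ ·) l u)
    (hv : IsBoundedUnder (· ≤ ·) l v) (hv' : IsBoundedUnder (· ≥ ·) l v)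
    (he : Tendsto e l (𝓝 0)) (h : ∀ᶠ i in l, u i ≤ v i + e i) : limsup u l ≤ limsup v l :=
  calc limsup u l ≤ limsup (v + e) l :=
        limsup_le_limsup h hu.isCoboundedUnder_le
          (isBoundedUnder_le_add hv he.isBoundedUnder_le)
    _ ≤ limsup v l + limsup e l :=
        limsup_add_le hv' hv he.isBoundedUnder_ge.isCoboundedUnder_le he.isBoundedUnder_le
    _ = limsup v l := by rw [he.limsup_eq, add_zero]

end LiminfLimsup

section Frequency

open Finset

variable {X : Type*} [MetricSpace X] {f : X → X} {x y : X} {N : ℕ} {δ ε : ℝ}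

variable (f x y) in
noncomputable def closeCount (ε : ℝ) (N : ℕ) : ℕ :=
  #{i ∈ range N | dist (f^[i] x) (f^[i] y) < ε}

variable (f x y) in
/-- `lowF f x y` and `uppF f x y` are, definitionally, the `liminf` and `limsup` of this. -/
noncomputable def closeFreq (ε : ℝ) (N : ℕ) : ℝ :=
  closeCount f x y ε N / N

lemma closeCount_le_self : closeCount f x y ε N ≤ N :=
  (card_filter_le _ _).trans_eq (card_range N)

lemma closeCount_mono_right : Monotone (closeCount f x y ε) := fun _ _ h =>
  card_le_card (filter_subset_filter _ (range_subset_range.2 h))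

lemma closeCount_mono_left : Monotone fun ε => closeCount f x y ε N := fun _ _ h =>
  card_le_card (monotone_filter_right _ fun _ _ hi => hi.trans_le h)

lemma closeFreq_nonneg : 0 ≤ closeFreq f x y ε N := by
  unfold closeFreq; positivity

lemma closeFreq_le_one : closeFreq f x y ε N ≤ 1 :=
  div_le_one_of_le₀ (mod_cast closeCount_le_self) N.cast_nonneg

lemma closeFreq_mono_left : Monotone fun ε => closeFreq f x y ε N := fun _ _ h =>
  div_le_div_of_nonneg_right (mod_cast closeCount_mono_left h) N.cast_nonneg

lemma lowF_mono : Monotone (lowF f x y) := fun _ _ h =>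
  liminf_le_liminf (.of_forall fun _ => closeFreq_mono_left h)
    (isBoundedUnder_of ⟨0, fun _ => closeFreq_nonneg⟩)
    (isBoundedUnder_of ⟨1, fun _ => closeFreq_le_one⟩).isCoboundedUnder_ge

lemma uppF_mono : Monotone (uppF f x y) := fun _ _ h =>
  limsup_le_limsup (.of_forall fun _ => closeFreq_mono_left h)
    (isBoundedUnder_of ⟨0, fun _ => closeFreq_nonneg⟩).isCoboundedUnder_le
    (isBoundedUnder_of ⟨1, fun _ => closeFreq_le_one⟩)

lemma lowF_le_lowF_and_uppF_le_uppF {g : X → X} {a b : ℕ → ℕ} {e : ℕ → ℝ}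
    (ha : map a atTop = atTop) (hb : map b atTop = atTop) (he : Tendsto e atTop (𝓝 0))
    (hle : ∀ N, closeFreq f x y δ (a N) ≤ closeFreq g x y ε (b N) + e N) :
    lowF f x y δ ≤ lowF g x y ε ∧ uppF f x y δ ≤ uppF g x y ε := by
  have h₀ : IsBoundedUnder (· ≥ ·) atTop (closeFreq f x y δ ∘ a) :=
    isBoundedUnder_of ⟨0, fun _ => closeFreq_nonneg⟩
  have h₁ : IsBoundedUnder (· ≤ ·) atTop (closeFreq g x y ε ∘ b) :=
    isBoundedUnder_of ⟨1, fun _ => closeFreq_le_one⟩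
  have h₂ : IsBoundedUnder (· ≥ ·) atTop (closeFreq g x y ε ∘ b) :=
    isBoundedUnder_of ⟨0, fun _ => closeFreq_nonneg⟩
  have hlow := liminf_le_liminf_of_le_add_of_tendsto_zero h₀ h₁ h₂ he (.of_forall hle)
  have hupp := limsup_le_limsup_of_le_add_of_tendsto_zero h₀ h₁ h₂ he (.of_forall hle)
  rw [liminf_comp, liminf_comp, ha, hb] at hlow
  rw [limsup_comp, limsup_comp, ha, hb] at hupp
  exact ⟨hlow, hupp⟩

end Frequency

section Counting

open Finset

variable {X : Type*} [MetricSpace X] {f : X → X} {x y : X} {n : ℕ} {δ ε : ℝ}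

lemma mul_closeCount_iterate_le
    (H : ∀ u v : X, dist u v < δ → ∀ k ≤ n, dist (f^[k] u) (f^[k] v) < ε) (M : ℕ) :
    n * closeCount (f^[n]) x y δ M ≤ closeCount f x y ε (n * M) := by
  have hcard : n * closeCount (f^[n]) x y δ M =
      #({j ∈ range M | dist ((f^[n])^[j] x) ((f^[n])^[j] y) < δ} ×ˢ range n) := by
    rw [card_product, card_range, mul_comm, closeCount]
  rw [hcard, closeCount]
  refine card_le_card_of_injOn (fun jr => n * jr.1 + jr.2) ?_ ?_
  · rintro ⟨j, r⟩ hjr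
    simp only [coe_product, Set.mem_prod, coe_filter, mem_range, Set.mem_ofPred_eq,
      mem_coe] at hjr ⊢
    obtain ⟨⟨hjM, hj⟩, hr⟩ := hjr
    refine ⟨by nlinarith, ?_⟩
    rw [← Function.iterate_mul] at hj
    simpa only [add_comm (n * j), Function.iterate_add_apply] using H _ _ hj r hr.le
  · rintro ⟨j, r⟩ hjr ⟨j', r'⟩ hjr' h
    simp only [coe_product, Set.mem_prod, mem_coe, mem_range] at hjr hjr' h
    have hn : 0 < n := hjr.2.pos
    have hj : j = j' := by
      simpa [Nat.mul_add_div hn, Nat.div_eq_of_lt hjr.2, Nat.div_eq_of_lt hjr'.2] using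
        congrArg (· / n) h
    subst hj
    simp only [Prod.mk.injEq, true_and]
    omega

lemma closeCount_le_mul_closeCount_iterate (hn : 0 < n)
    (H : ∀ u v : X, dist u v < δ → ∀ k ≤ n, dist (f^[k] u) (f^[k] v) < ε) (N : ℕ) :
    closeCount f x y δ N ≤ n * closeCount (f^[n]) x y ε (N / n + 2) := by
  refine card_le_mul_card_image_of_maps_to (f := fun i => i / n + 1) ?_ n ?_
  · intro i hi
    simp only [mem_filter, mem_range] at hi ⊢
    refine ⟨by have := Nat.div_le_div_right (c := n) hi.1.le; omega, ?_⟩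
    have hlt : i < n * (i / n + 1) := by
      have := Nat.lt_div_mul_add (a := i) hn; rw [mul_comm] at this; linarith
    have hle : n * (i / n + 1) ≤ i + n := by
      have := Nat.div_mul_le_self i n; rw [mul_comm] at this; linarith
    have := H _ _ hi.2 (n * (i / n + 1) - i) (by omega)
    rwa [← Function.iterate_add_apply, ← Function.iterate_add_apply, Nat.sub_add_cancel hlt.le,
      Function.iterate_mul] at this
  · intro j _
    refine (card_le_card_of_injOn (· % n) (fun i _ => mem_range.2 (Nat.mod_lt i hn)) ?_).trans
      (card_range n).le
    intro i hi i' hi' h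
    simp only [coe_filter, Set.mem_ofPred_eq] at hi hi'
    have hq : i / n = i' / n := by omega
    rw [← Nat.div_add_mod i n, ← Nat.div_add_mod i' n, hq]
    exact congrArg _ h

end Counting

section Comparison

variable {X : Type*} [MetricSpace X] {f : X → X} {x y : X} {n : ℕ} {δ ε : ℝ}

lemma closeFreq_iterate_div_le
    (H : ∀ u v : X, dist u v < δ → ∀ k ≤ n, dist (f^[k] u) (f^[k] v) < ε) (N : ℕ) :
    closeFreq (f^[n]) x y δ (N / n) ≤ closeFreq f x y ε N + n / N := by
  rcases Nat.eq_zero_or_pos (N / n) with hM | hM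
  · simp only [closeFreq, hM, CharP.cast_eq_zero, div_zero]
    exact add_nonneg closeFreq_nonneg (by positivity)
  have hn : 0 < n := Nat.pos_of_ne_zero fun h => by simp [h] at hM
  have hN : 0 < N := Nat.pos_of_ne_zero fun h => by simp [h] at hM
  have hA : (n * closeCount (f^[n]) x y δ (N / n) : ℝ) ≤ closeCount f x y ε N := mod_cast
    (mul_closeCount_iterate_le H _).trans (closeCount_mono_right (Nat.mul_div_le N n))
  have hAM : (closeCount (f^[n]) x y δ (N / n) : ℝ) ≤ (N / n : ℕ) := mod_cast closeCount_le_self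
  have hNM : (N : ℝ) ≤ n * ((N / n : ℕ) + 1) := by
    exact_mod_cast (Nat.lt_div_mul_add (a := N) hn).le.trans_eq (by ring)
  rw [closeFreq, closeFreq, ← add_div, div_le_div_iff₀ (by positivity) (by positivity)]
  nlinarith [mul_le_mul_of_nonneg_left hNM (Nat.cast_nonneg (closeCount (f^[n]) x y δ (N / n))),
    mul_le_mul_of_nonneg_left hAM (Nat.cast_nonneg n)]

lemma closeFreq_le_closeFreq_iterate_div_add_two (hn : 0 < n)
    (H : ∀ u v : X, dist u v < δ → ∀ k ≤ n, dist (f^[k] u) (f^[k] v) < ε) (N : ℕ) :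
    closeFreq f x y δ N ≤ closeFreq (f^[n]) x y ε (N / n + 2) + 2 * n / N := by
  rcases Nat.eq_zero_or_pos N with hN | hN
  · simp only [closeFreq, hN, CharP.cast_eq_zero, div_zero]
    exact add_nonneg closeFreq_nonneg le_rfl
  have hC : (closeCount f x y δ N : ℝ) ≤ n * closeCount (f^[n]) x y ε (N / n + 2) :=
    mod_cast closeCount_le_mul_closeCount_iterate hn H N
  have hDM : (closeCount (f^[n]) x y ε (N / n + 2) : ℝ) ≤ (N / n + 2 : ℕ) :=
    mod_cast closeCount_le_self
  have hMN : (n : ℝ) * (N / n + 2 : ℕ) ≤ N + 2 * n := by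
    exact_mod_cast (mul_add n (N / n) 2).trans_le (by linarith [Nat.mul_div_le N n])
  rw [closeFreq, closeFreq, ← sub_le_iff_le_add, ← sub_div,
    div_le_div_iff₀ (by positivity) (by positivity)]
  nlinarith [mul_le_mul_of_nonneg_left hMN (Nat.cast_nonneg (closeCount (f^[n]) x y ε (N / n + 2))),
    mul_le_mul_of_nonneg_left hDM (by positivity : (0 : ℝ) ≤ 2 * n),
    mul_le_mul_of_nonneg_right hC (Nat.cast_nonneg (N / n + 2))]

end Comparison

section Iterate

variable {X : Type*} [MetricSpace X] {f : X → X} {n : ℕ}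

lemma exists_forall_dist_iterate_lt [CompactSpace X] (hf : Continuous f) (n : ℕ) {ε : ℝ}
    (hε : 0 < ε) : ∃ δ ∈ Set.Ioc 0 ε,
      ∀ u v : X, dist u v < δ → ∀ k ≤ n, dist (f^[k] u) (f^[k] v) < ε := by
  let orbit : X → Fin (n + 1) → X := fun u k => f^[k] u
  have horbit : UniformContinuous orbit :=
    CompactSpace.uniformContinuous_of_continuous (continuous_pi fun k => hf.iterate k)
  obtain ⟨δ, hδ, hclose⟩ := Metric.uniformContinuous_iff.1 horbit ε hε
  refine ⟨min δ ε, ⟨lt_min hδ hε, min_le_right δ ε⟩, fun u v huv k hk => ?_⟩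
  exact (dist_pi_lt_iff hε).1 (hclose (huv.trans_le (min_le_left δ ε))) ⟨k, Nat.lt_succ_of_le hk⟩

variable {x y : X} {δ ε : ℝ}

lemma lowF_iterate_le_and_uppF_iterate_le
    (H : ∀ u v : X, dist u v < δ → ∀ k ≤ n, dist (f^[k] u) (f^[k] v) < ε) (hn : 0 < n) :
    lowF (f^[n]) x y δ ≤ lowF f x y ε ∧ uppF (f^[n]) x y δ ≤ uppF f x y ε :=
  lowF_le_lowF_and_uppF_le_uppF (map_div_atTop_eq_nat n hn) map_id
    (tendsto_const_div_atTop_nhds_zero_nat _) (closeFreq_iterate_div_le H)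

lemma lowF_le_lowF_iterate_and_uppF_le_uppF_iterate
    (H : ∀ u v : X, dist u v < δ → ∀ k ≤ n, dist (f^[k] u) (f^[k] v) < ε) (hn : 0 < n) :
    lowF f x y δ ≤ lowF (f^[n]) x y ε ∧ uppF f x y δ ≤ uppF (f^[n]) x y ε := by
  have hmap : map (fun N => N / n + 2) atTop = atTop :=
    calc map (fun N => N / n + 2) atTop = map (· + 2) (map (· / n) atTop) := map_map.symm
      _ = atTop := by rw [map_div_atTop_eq_nat n hn, map_add_atTop_eq_nat]
  exact lowF_le_lowF_and_uppF_le_uppF map_id hmap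
    (tendsto_const_div_atTop_nhds_zero_nat _) (closeFreq_le_closeFreq_iterate_div_add_two hn H)

lemma interleaved_lowF_iterate_and_uppF_iterate [CompactSpace X] (hf : Continuous f)
    (hn : 0 < n) (x y : X) :
    Interleaved (lowF (f^[n]) x y) (lowF f x y) ∧ Interleaved (uppF (f^[n]) x y) (uppF f x y) := by
  have key : ∀ ε > 0, ∃ δ ∈ Set.Ioc 0 ε,
      (lowF (f^[n]) x y δ ≤ lowF f x y ε ∧ uppF (f^[n]) x y δ ≤ uppF f x y ε) ∧
      (lowF f x y δ ≤ lowF (f^[n]) x y ε ∧ uppF f x y δ ≤ uppF (f^[n]) x y ε) := fun ε hε =>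
    (exists_forall_dist_iterate_lt hf n hε).imp fun _ ⟨hδ, H⟩ =>
      ⟨hδ, lowF_iterate_le_and_uppF_iterate_le H hn,
        lowF_le_lowF_iterate_and_uppF_le_uppF_iterate H hn⟩
  exact ⟨fun ε hε => (key ε hε).imp fun _ ⟨hδ, h₁, h₂⟩ => ⟨hδ, h₁.1, h₂.1⟩,
    fun ε hε => (key ε hε).imp fun _ ⟨hδ, h₁, h₂⟩ => ⟨hδ, h₁.2, h₂.2⟩⟩

end Iterate

lemma mem_Dset_iff {X : Type*} [MetricSpace X] {f : X → X} {p q : ℝ} {z : X × X} :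
    z ∈ Dset f p q ↔ ∀ᶠ ε in 𝓝[>] 0, lowF f z.1 z.2 ε = p ∧ uppF f z.1 z.2 ε = q := by
  refine ⟨fun ⟨ε₀, hε₀, h⟩ => mem_of_superset (Ioc_mem_nhdsGT hε₀) fun ε hε => h ε hε.1 hε.2,
    fun h => ?_⟩
  obtain ⟨ε₀, hε₀, h⟩ := (nhdsGT_basis (0 : ℝ)).eventually_iff.1 h
  exact ⟨ε₀ / 2, half_pos hε₀, fun ε hε hεε₀ => h ⟨hε, hεε₀.trans_lt (half_lt_self hε₀)⟩⟩

theorem statement_9_general {X : Type*} [MetricSpace X] [CompactSpace X] (f : X → X)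
    (hfc : Continuous f) (n : ℕ) (hn : 1 ≤ n)
    (p q : ℝ) :
    Eset (f^[n]) p q = Eset f p q ∧ Dset (f^[n]) p q = Dset f p q := by
  have hint := interleaved_lowF_iterate_and_uppF_iterate hfc hn
  refine ⟨Set.ext fun z => ?_, Set.ext fun z => ?_⟩
  · obtain ⟨hlow, hupp⟩ := hint z.1 z.2
    exact and_congr (hlow.tendsto_iff lowF_mono lowF_mono) (hupp.tendsto_iff uppF_mono uppF_mono)
  · obtain ⟨hlow, hupp⟩ := hint z.1 z.2
    simp only [mem_Dset_iff, eventually_and]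
    exact and_congr (hlow.eventually_eq_iff lowF_mono lowF_mono)
      (hupp.eventually_eq_iff uppF_mono uppF_mono)

/-- Let `X` be a compact metric space, `f : X → X` a continuous
surjection, `n ≥ 1`, and `[p,q]` a compact subinterval of `[0,1]`. Then
`E_{f^n}([p,q]) = E_f([p,q])` and `D_{f^n}([p,q]) = D_f([p,q])`. -/
theorem statement_9 {X : Type*} [MetricSpace X] [CompactSpace X] (f : X → X)
    (hfc : Continuous f) (hfs : Function.Surjective f) (n : ℕ) (hn : 1 ≤ n)
    (p q : ℝ) (hp : 0 ≤ p) (hpq : p ≤ q) (hq : q ≤ 1) :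
    Eset (f^[n]) p q = Eset f p q ∧ Dset (f^[n]) p q = Dset f p q :=
  statement_9_general f hfc n hn p q
end

section
/- Let α = (n_i)_{i≥0} be a sequence of positive integers with n_i ≥ 2 for infinitely many i, and let Σ_α = ∏_{i≥0}{0,…,n_i−1} be equipped with the metric ρ(x,y) = ∏_{0≤i<δ(x,y)} n_i^{−1} for x ≠ y (δ(x,y) = min{i ≥ 0 : x_i ≠ y_i}) and ρ(x,x) = 0. Then dim_H Σ_α = 1 and H^1(Σ_α) = 1. -/
open Filter Set MeasureTheory Topology TopologicalSpace

noncomputable section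

/-- The symbolic space `Σ_α = ∏_{i≥0} {0,…,n_i−1}` for a sequence `α = (n_i)` of
positive integers. -/
def PiSeq (α : ℕ → ℕ+) : Type := ∀ i : ℕ, Fin (α i)

namespace PiSeq

variable {α : ℕ → ℕ+}

theorem exists_ne {x y : PiSeq α} (h : ¬x = y) : ∃ i, x i ≠ y i := by
  by_contra hc
  push_neg at hc
  exact h (funext hc)

instance decPredNe (x y : PiSeq α) : DecidablePred fun n => x n ≠ y n :=
  fun _ => inferInstance

open Classical in
/-- The metric `ρ(x,y) = ∏_{0 ≤ i < δ(x,y)} n_i⁻¹` on `Σ_α`. -/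
def sdist (x y : PiSeq α) : ℝ :=
  if h : x = y then 0
  else ∏ i ∈ Finset.range (Nat.find (exists_ne h)), (((α i : ℕ) : ℝ))⁻¹

theorem sdist_self (x : PiSeq α) : sdist x x = 0 := by
  unfold sdist
  exact dif_pos rfl

theorem sdist_eq {x y : PiSeq α} (h : ¬x = y) :
    sdist x y = ∏ i ∈ Finset.range (Nat.find (exists_ne h)), (((α i : ℕ) : ℝ))⁻¹ := by
  unfold sdist
  exact dif_neg h

theorem factor_pos (i : ℕ) : (0:ℝ) < (((α i : ℕ) : ℝ))⁻¹ := by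
  have : (0:ℝ) < ((α i : ℕ) : ℝ) := by exact_mod_cast (α i).pos
  positivity

theorem factor_le_one (i : ℕ) : (((α i : ℕ) : ℝ))⁻¹ ≤ 1 := by
  have : (1:ℝ) ≤ ((α i : ℕ) : ℝ) := by exact_mod_cast (α i).one_le
  exact inv_le_one_of_one_le₀ this

theorem prod_pos (n : ℕ) : (0:ℝ) < ∏ i ∈ Finset.range n, (((α i : ℕ) : ℝ))⁻¹ :=
  Finset.prod_pos fun i _ => factor_pos i

theorem prod_anti {m n : ℕ} (h : m ≤ n) :
    ∏ i ∈ Finset.range n, (((α i : ℕ) : ℝ))⁻¹ ≤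
      ∏ i ∈ Finset.range m, (((α i : ℕ) : ℝ))⁻¹ := by
  rw [← Finset.prod_range_mul_prod_Ico _ h]
  apply mul_le_of_le_one_right (le_of_lt (prod_pos m))
  exact Finset.prod_le_one (fun i _ => (factor_pos i).le) (fun i _ => factor_le_one i)

theorem sdist_nonneg' (x y : PiSeq α) : 0 ≤ sdist x y := by
  by_cases h : x = y
  · rw [h, sdist_self]
  · rw [sdist_eq h]
    exact (prod_pos _).le

theorem eq_of_lt_find {x y : PiSeq α} (h : ¬x = y) {i : ℕ}
    (hi : i < Nat.find (exists_ne h)) : x i = y i :=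
  not_not.mp (Nat.find_min (exists_ne h) hi)

theorem sdist_le_of_agree {x y : PiSeq α} {n : ℕ} (h : ∀ i < n, x i = y i) :
    sdist x y ≤ ∏ i ∈ Finset.range n, (((α i : ℕ) : ℝ))⁻¹ := by
  by_cases hxy : x = y
  · rw [hxy, sdist_self]
    exact (prod_pos n).le
  · rw [sdist_eq hxy]
    apply prod_anti
    rw [Nat.le_find_iff]
    intro m hm
    simp only [ne_eq, not_not]
    exact h m hm

theorem sdist_comm (x y : PiSeq α) : sdist x y = sdist y x := by
  by_cases h : x = y
  · rw [h]
  · rw [sdist_eq h, sdist_eq (fun hyx => h hyx.symm)]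
    congr 2
    exact le_antisymm (Nat.find_mono fun n hn => hn.symm)
      (Nat.find_mono fun n hn => hn.symm)

theorem sdist_le_max (x y z : PiSeq α) : sdist x z ≤ max (sdist x y) (sdist y z) := by
  by_cases hxz : x = z
  · rw [hxz, sdist_self]
    exact le_max_of_le_left (sdist_nonneg' _ _)
  by_cases hxy : x = y
  · rw [hxy]; exact le_max_right _ _
  by_cases hyz : y = z
  · rw [← hyz]; exact le_max_left _ _
  rcases le_total (Nat.find (exists_ne hxy)) (Nat.find (exists_ne hyz)) with hle | hle
  · refine le_max_of_le_left ?_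
    rw [sdist_eq hxy]
    exact sdist_le_of_agree fun i hi =>
      (eq_of_lt_find hxy hi).trans (eq_of_lt_find hyz (lt_of_lt_of_le hi hle))
  · refine le_max_of_le_right ?_
    rw [sdist_eq hyz]
    exact sdist_le_of_agree fun i hi =>
      (eq_of_lt_find hxy (lt_of_lt_of_le hi hle)).trans (eq_of_lt_find hyz hi)

theorem eq_of_sdist_eq_zero {x y : PiSeq α} (h : sdist x y = 0) : x = y := by
  by_contra hxy
  rw [sdist_eq hxy] at h
  exact absurd h (ne_of_gt (prod_pos _))

instance : MetricSpace (PiSeq α) where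
  dist := sdist
  dist_self := sdist_self
  dist_comm := sdist_comm
  dist_triangle x y z :=
    (sdist_le_max x y z).trans (max_le_add_of_nonneg (sdist_nonneg' _ _) (sdist_nonneg' _ _))
  eq_of_dist_eq_zero := fun h => eq_of_sdist_eq_zero h

instance : MeasurableSpace (PiSeq α) := borel _

instance : BorelSpace (PiSeq α) := ⟨rfl⟩

end PiSeq

/-!
Write `N n = n_0 ⋯ n_{n-1}` (`radixProd α n`). The `N n` cylinders of length `n` cover `Σ_α`
and have diameter at most `1 / N n → 0`, so `H¹(Σ_α) ≤ 1`. Conversely, reading `x` as the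
mixed-radix expansion `∑ x_i / N (i+1)` is a `1`-Lipschitz map onto a set containing `[0, 1)`:
if `x` and `y` first differ at index `n`, both expansions lie in the same interval of length
`1 / N n = ρ(x, y)`. Hence `H¹(Σ_α) ≥ H¹([0,1)) = 1`, and a set of positive finite
`H¹`-measure has dimension `1`.
-/

open scoped ENNReal

theorem Nat.tendsto_prod_range_atTop {a : ℕ → ℕ} (ha : ∀ i, 0 < a i)
    (h2 : ∃ᶠ i in atTop, 2 ≤ a i) : Tendsto (fun n => ∏ i ∈ Finset.range n, a i) atTop atTop := by
  have mono : Monotone fun n => ∏ i ∈ Finset.range n, a i := fun m n hmn =>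
    Finset.prod_le_prod_of_subset_of_one_le' (Finset.range_subset_range.2 hmn)
      fun i _ _ => ha i
  have pow_le : ∀ k, ∀ᶠ n in atTop, 2 ^ k ≤ ∏ i ∈ Finset.range n, a i := by
    intro k
    induction k with
    | zero => exact .of_forall fun n => Finset.one_le_prod' fun i _ => ha i
    | succ k ih =>
      obtain ⟨N, hN⟩ := eventually_atTop.1 ih
      obtain ⟨b, hbN, hb⟩ := frequently_atTop.1 h2 N
      refine eventually_atTop.2 ⟨b + 1, fun n hn => le_trans ?_ (mono hn)⟩
      calc 2 ^ (k + 1) = 2 ^ k * 2 := pow_succ 2 k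
        _ ≤ (∏ i ∈ Finset.range b, a i) * a b := Nat.mul_le_mul (hN b hbN) hb
        _ = ∏ i ∈ Finset.range (b + 1), a i := (Finset.prod_range_succ a b).symm
  exact tendsto_atTop.2 fun k => (pow_le k).mono fun n hn => Nat.lt_two_pow_self.le.trans hn

theorem MeasureTheory.Measure.hausdorffMeasure_le_liminf_card_mul {X β : Type*} [EMetricSpace X]
    [MeasurableSpace X] [BorelSpace X] {ι : β → Type*} [∀ n, Fintype (ι n)] {d : ℝ}
    (hd : 0 ≤ d) (s : Set X) {l : Filter β} (r : β → ℝ≥0∞) (hr : Tendsto r l (𝓝 0))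
    (t : ∀ n : β, ι n → Set X) (ht : ∀ n i, Metric.ediam (t n i) ≤ r n)
    (hst : ∀ n, s ⊆ ⋃ i, t n i) :
    μH[d] s ≤ liminf (fun n => Fintype.card (ι n) * r n ^ d) l := by
  refine (hausdorffMeasure_le_liminf_sum d s r hr t (.of_forall ht) (.of_forall hst)).trans
    (liminf_le_liminf (.of_forall fun n => ?_))
  calc ∑ i, Metric.ediam (t n i) ^ d
      ≤ ∑ _i : ι n, r n ^ d := Finset.sum_le_sum fun i _ => ENNReal.rpow_le_rpow (ht n i) hd
    _ = Fintype.card (ι n) * r n ^ d := by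
      rw [Finset.sum_const, Finset.card_univ, nsmul_eq_mul]

namespace PiSeq

variable {α : ℕ → ℕ+}

def radixProd (α : ℕ → ℕ+) (n : ℕ) : ℕ := ∏ i ∈ Finset.range n, (α i : ℕ)

theorem radixProd_pos (n : ℕ) : 0 < radixProd α n :=
  Finset.prod_pos fun i _ => (α i).pos

theorem radixProd_succ (n : ℕ) : radixProd α (n + 1) = radixProd α n * α n :=
  Finset.prod_range_succ _ n

theorem tendsto_radixProd (hα : ∃ᶠ i in atTop, 2 ≤ (α i : ℕ)) :
    Tendsto (radixProd α) atTop atTop :=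
  Nat.tendsto_prod_range_atTop (fun i => (α i).pos) hα

theorem prod_range_inv_eq (n : ℕ) :
    ∏ i ∈ Finset.range n, (((α i : ℕ) : ℝ))⁻¹ = ((radixProd α n : ℕ) : ℝ)⁻¹ := by
  simp [radixProd, Finset.prod_inv_distrib]

theorem dist_le_of_forall_lt_eq {x y : PiSeq α} {n : ℕ} (h : ∀ i < n, x i = y i) :
    dist x y ≤ ((radixProd α n : ℕ) : ℝ)⁻¹ :=
  prod_range_inv_eq (α := α) n ▸ sdist_le_of_agree h

theorem dist_eq_of_ne {x y : PiSeq α} (h : x ≠ y) :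
    dist x y = ((radixProd α (Nat.find (exists_ne h)) : ℕ) : ℝ)⁻¹ :=
  (sdist_eq h).trans (prod_range_inv_eq _)

def cylinder (n : ℕ) (w : (i : Fin n) → Fin (α i)) : Set (PiSeq α) :=
  {x | ∀ i : Fin n, x i = w i}

theorem ediam_cylinder_le (n : ℕ) (w : (i : Fin n) → Fin (α i)) :
    Metric.ediam (cylinder n w) ≤ ((radixProd α n : ℕ) : ℝ≥0∞)⁻¹ := by
  refine Metric.ediam_le fun x hx y hy => ?_
  rw [edist_dist, ← ENNReal.ofReal_natCast, ← ENNReal.ofReal_inv_of_pos (by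
    exact_mod_cast radixProd_pos n)]
  exact ENNReal.ofReal_le_ofReal <| dist_le_of_forall_lt_eq fun i hi =>
    (hx ⟨i, hi⟩).trans (hy ⟨i, hi⟩).symm

theorem univ_subset_iUnion_cylinder (n : ℕ) : (univ : Set (PiSeq α)) ⊆ ⋃ w, cylinder n w :=
  fun x _ => mem_iUnion.2 ⟨fun i => x i, fun _ => rfl⟩

theorem card_words_eq_radixProd (n : ℕ) :
    Fintype.card ((i : Fin n) → Fin (α i)) = radixProd α n := by
  simp [Fintype.card_pi, radixProd, Fin.prod_univ_eq_prod_range (fun i => (α i : ℕ)) n]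

theorem hausdorffMeasure_univ_le_one (hα : ∃ᶠ i in atTop, 2 ≤ (α i : ℕ)) :
    μH[1] (univ : Set (PiSeq α)) ≤ 1 := by
  have hr : Tendsto (fun n => ((radixProd α n : ℕ) : ℝ≥0∞)⁻¹) atTop (𝓝 0) :=
    ENNReal.tendsto_inv_nat_nhds_zero.comp (tendsto_radixProd hα)
  refine (Measure.hausdorffMeasure_le_liminf_card_mul zero_le_one univ _ hr cylinder
    ediam_cylinder_le univ_subset_iUnion_cylinder).trans_eq ?_
  have hcancel (n : ℕ) : ((radixProd α n : ℕ) : ℝ≥0∞) * ((radixProd α n : ℕ) : ℝ≥0∞)⁻¹ = 1 :=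
    ENNReal.mul_inv_cancel (by exact_mod_cast (radixProd_pos n).ne') (ENNReal.natCast_ne_top _)
  simp only [card_words_eq_radixProd, ENNReal.rpow_one, hcancel, liminf_const]

def toReal (x : PiSeq α) : ℝ := ∑' i, ((x i : ℕ) : ℝ) / radixProd α (i + 1)

theorem digit_div_le (x : PiSeq α) (i : ℕ) :
    ((x i : ℕ) : ℝ) / radixProd α (i + 1) ≤
      ((radixProd α i : ℕ) : ℝ)⁻¹ - ((radixProd α (i + 1) : ℕ) : ℝ)⁻¹ := by
  have hR : (0 : ℝ) < radixProd α i := by exact_mod_cast radixProd_pos i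
  have hx : ((x i : ℕ) : ℝ) + 1 ≤ (α i : ℕ) := by exact_mod_cast (x i).isLt
  have hαi : (0 : ℝ) < (α i : ℕ) := by exact_mod_cast (α i).pos
  rw [radixProd_succ, Nat.cast_mul, div_le_iff₀ (by positivity)]
  field_simp
  linarith

theorem sum_range_digit_div_le (x : PiSeq α) (n m : ℕ) :
    ∑ i ∈ Finset.range m, ((x (i + n) : ℕ) : ℝ) / radixProd α (i + n + 1) ≤
      ((radixProd α n : ℕ) : ℝ)⁻¹ := by
  calc ∑ i ∈ Finset.range m, ((x (i + n) : ℕ) : ℝ) / radixProd α (i + n + 1)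
      ≤ ∑ i ∈ Finset.range m, (((radixProd α (i + n) : ℕ) : ℝ)⁻¹ -
          ((radixProd α (i + 1 + n) : ℕ) : ℝ)⁻¹) := by
        refine Finset.sum_le_sum fun i _ => ?_
        rw [Nat.add_right_comm i 1 n]
        exact digit_div_le x (i + n)
    _ = ((radixProd α n : ℕ) : ℝ)⁻¹ - ((radixProd α (m + n) : ℕ) : ℝ)⁻¹ := by
        rw [Finset.sum_range_sub' (fun i => ((radixProd α (i + n) : ℕ) : ℝ)⁻¹), zero_add]
    _ ≤ ((radixProd α n : ℕ) : ℝ)⁻¹ := by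
        simp only [sub_le_self_iff, inv_nonneg, Nat.cast_nonneg]

theorem summable_digit_div (x : PiSeq α) :
    Summable fun i => ((x i : ℕ) : ℝ) / radixProd α (i + 1) :=
  summable_of_sum_range_le (fun _ => by positivity) (sum_range_digit_div_le x 0)

theorem toReal_eq_sum_add_tsum (x : PiSeq α) (n : ℕ) :
    toReal x = ∑ i ∈ Finset.range n, ((x i : ℕ) : ℝ) / radixProd α (i + 1) +
      ∑' i, ((x (i + n) : ℕ) : ℝ) / radixProd α (i + n + 1) :=
  ((summable_digit_div x).sum_add_tsum_nat_add n).symm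

theorem abs_toReal_sub_le {x y : PiSeq α} {n : ℕ} (h : ∀ i < n, x i = y i) :
    |toReal x - toReal y| ≤ ((radixProd α n : ℕ) : ℝ)⁻¹ := by
  have tail_mem (z : PiSeq α) :
      0 ≤ ∑' i, ((z (i + n) : ℕ) : ℝ) / radixProd α (i + n + 1) ∧
        ∑' i, ((z (i + n) : ℕ) : ℝ) / radixProd α (i + n + 1) ≤
          ((radixProd α n : ℕ) : ℝ)⁻¹ :=
    ⟨tsum_nonneg fun _ => by positivity,
      Real.tsum_le_of_sum_range_le (fun _ => by positivity) (sum_range_digit_div_le z n)⟩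
  have head_eq : ∑ i ∈ Finset.range n, ((x i : ℕ) : ℝ) / radixProd α (i + 1) =
      ∑ i ∈ Finset.range n, ((y i : ℕ) : ℝ) / radixProd α (i + 1) :=
    Finset.sum_congr rfl fun i hi => by rw [h i (Finset.mem_range.1 hi)]
  rw [toReal_eq_sum_add_tsum x n, toReal_eq_sum_add_tsum y n, head_eq, abs_le]
  obtain ⟨hx0, hx1⟩ := tail_mem x
  obtain ⟨hy0, hy1⟩ := tail_mem y
  constructor <;> linarith

theorem lipschitzWith_toReal : LipschitzWith 1 (toReal (α := α)) := by
  refine LipschitzWith.of_dist_le_mul fun x y => ?_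
  rw [NNReal.coe_one, one_mul]
  by_cases h : x = y
  · simp [h]
  rw [dist_eq_of_ne h, Real.dist_eq]
  exact abs_toReal_sub_le fun i hi => eq_of_lt_find h hi

def digits (α : ℕ → ℕ+) (t : ℝ) : PiSeq α :=
  fun n => ⟨⌊t * radixProd α (n + 1)⌋₊ % α n, Nat.mod_lt _ (α n).pos⟩

theorem floor_mul_radixProd_succ (t : ℝ) (n : ℕ) :
    ⌊t * radixProd α (n + 1)⌋₊ = ⌊t * radixProd α n⌋₊ * α n + digits α t n := by
  have hαn : ((α n : ℕ) : ℝ) ≠ 0 := by exact_mod_cast (α n).ne_zero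
  have hdiv : ⌊t * radixProd α (n + 1)⌋₊ / α n = ⌊t * radixProd α n⌋₊ := by
    rw [← Nat.floor_div_natCast, radixProd_succ, Nat.cast_mul, ← mul_assoc,
      mul_div_cancel_right₀ _ hαn]
  rw [← hdiv]
  exact (Nat.div_add_mod' _ _).symm

theorem sum_range_digits_div {t : ℝ} (ht : t < 1) (n : ℕ) :
    ∑ i ∈ Finset.range n, ((digits α t i : ℕ) : ℝ) / radixProd α (i + 1) =
      ⌊t * radixProd α n⌋₊ / radixProd α n := by
  induction n with
  | zero => simp [radixProd, Nat.floor_eq_zero.2 ht]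
  | succ n ih =>
    have hR : ((radixProd α n : ℕ) : ℝ) ≠ 0 := by exact_mod_cast (radixProd_pos n).ne'
    have hαn : ((α n : ℕ) : ℝ) ≠ 0 := by exact_mod_cast (α n).ne_zero
    rw [Finset.sum_range_succ, ih, floor_mul_radixProd_succ t n, radixProd_succ]
    push_cast
    field_simp

theorem toReal_digits (hα : ∃ᶠ i in atTop, 2 ≤ (α i : ℕ)) {t : ℝ} (ht : t ∈ Ico 0 1) :
    toReal (digits α t) = t := by
  have hR : Tendsto (fun n => ((radixProd α n : ℕ) : ℝ)) atTop atTop :=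
    tendsto_natCast_atTop_atTop.comp (tendsto_radixProd hα)
  refine tendsto_nhds_unique (summable_digit_div _).hasSum.tendsto_sum_nat ?_
  simpa only [Function.comp_def, sum_range_digits_div ht.2] using
    (tendsto_nat_floor_mul_div_atTop ht.1).comp hR

theorem one_le_hausdorffMeasure_univ (hα : ∃ᶠ i in atTop, 2 ≤ (α i : ℕ)) :
    1 ≤ μH[1] (univ : Set (PiSeq α)) :=
  calc (1 : ℝ≥0∞) = μH[1] (Ico (0 : ℝ) 1) := by simp [hausdorffMeasure_real]
    _ ≤ μH[1] (toReal '' (univ : Set (PiSeq α))) :=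
      measure_mono fun t ht => ⟨digits α t, trivial, toReal_digits hα ht⟩
    _ ≤ μH[1] (univ : Set (PiSeq α)) := by
      simpa using lipschitzWith_toReal.hausdorffMeasure_image_le zero_le_one univ

theorem hausdorffMeasure_univ (hα : ∃ᶠ i in atTop, 2 ≤ (α i : ℕ)) :
    μH[1] (univ : Set (PiSeq α)) = 1 :=
  le_antisymm (hausdorffMeasure_univ_le_one hα) (one_le_hausdorffMeasure_univ hα)

end PiSeq

/-- If `α = (n_i)` is a sequence of positive integers with `n_i ≥ 2`
for infinitely many `i`, then `dim_H Σ_α = 1` and `H¹(Σ_α) = 1`. -/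
theorem statement_10 (α : ℕ → ℕ+) (hα : ∀ N : ℕ, ∃ i, N ≤ i ∧ 2 ≤ (α i : ℕ)) :
    dimH (Set.univ : Set (PiSeq α)) = 1 ∧ μH[1] (Set.univ : Set (PiSeq α)) = 1 := by
  have hμ := PiSeq.hausdorffMeasure_univ (frequently_atTop.2 hα)
  refine ⟨?_, hμ⟩
  simpa using dimH_of_hausdorffMeasure_ne_zero_ne_top (d := 1) (by simp [hμ]) (by simp [hμ])

end
end

section
/- Let K ≥ 2, m ≥ 2, and let 𝒦 = (K_0,…,K_{m−1}) be a partition of {0,…,K−1} into nonempty sets. Let E = sup_{n≥1} |ε_n|, where ε_n = ln n! − (n ln n − n + ln√(2πn)) (by Stirling's formula ε_n → 0, so E < ∞). Then for every n ≥ 1 and every p ∈ Q_{m,n}: |(1/n)·ln a_{𝒦,p,n} − f_𝒦(p)| ≤ (m+1)(ln√(2πn) + E)/n. In particular, sup{|(1/n)·ln a_{𝒦,p,n} − f_𝒦(p)| : p ∈ Q_{m,n}} → 0 as n → ∞. -/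
open Filter Set Real

noncomputable section

/-- The entropy-like function
`f_𝒦(p) = ∑_{0≤i<m} −p_i ln(p_i / #(K_i))` (with `0·ln 0 = 0`; note `Real.log 0 = 0`). -/
def fK {K m : ℕ} (𝒦 : Fin m → Finset (Fin K)) (p : Fin m → ℝ) : ℝ :=
  ∑ i, -(p i * Real.log (p i / (𝒦 i).card))

/-- `a_{𝒦,p,n}`: the number of words `ω ∈ {0,…,K−1}^n` whose frequency vector on the
partition `𝒦` equals `p`. -/
def aKpn {K m : ℕ} (𝒦 : Fin m → Finset (Fin K)) (n : ℕ) (p : Fin m → ℝ) : ℕ :=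
  Nat.card {ω : Fin n → Fin K |
    ∀ i, (((Finset.univ.filter (fun j => ω j ∈ 𝒦 i)).card : ℝ)) = n * p i}

/-- The error term `ε_n` in Stirling's formula
`ln n! = n ln n − n + ln √(2πn) + ε_n`. -/
def epsStirling (n : ℕ) : ℝ :=
  Real.log (Nat.factorial n) - ((n : ℝ) * Real.log n - n + Real.log (Real.sqrt (2 * π * n)))

/-- `E = sup_n |ε_n|`. -/
def Econst : ℝ := ⨆ n : ℕ, |epsStirling n|

/-!
Let `χ a` be the block of the letter `a`. Expanding `(∑ₐ X_{χ a})ⁿ = (∑ᵢ #Kᵢ • Xᵢ)ⁿ` once as a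
sum over words and once by the multinomial theorem shows that the number of words with block
counts `kᵢ = n pᵢ` is `n! / ∏ᵢ kᵢ! · ∏ᵢ #Kᵢ^{kᵢ}`. Writing `ln j! = j ln j − j + (ln √(2πj) + ε_j)`,
the main terms of `ln a_{𝒦,p,n}` add up to exactly `n f_𝒦(p)`, and what is left is the Stirling
correction at `n` minus those at the `m` numbers `kᵢ ≤ n`, each of absolute value at most
`ln √(2πn) + E`.
-/

open Finset MvPolynomial Function Topology
open scoped Nat

theorem exists_eq_iff_mem_of_pairwise_disjoint {α σ : Type*} (𝒦 : σ → Finset α)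
    (hdisj : Pairwise (Disjoint on 𝒦)) (hcover : ∀ a, ∃ i, a ∈ 𝒦 i) :
    ∃ χ : α → σ, ∀ a i, χ a = i ↔ a ∈ 𝒦 i := by
  choose χ hχ using hcover
  refine ⟨χ, fun a i => ⟨fun h => h ▸ hχ a, fun ha => ?_⟩⟩
  by_contra hne
  exact Finset.disjoint_left.mp (hdisj hne) (hχ a) ha

section Counting
variable {α σ ι : Type*} [Fintype ι]

def classCount (χ : α → σ) (ω : ι → α) : σ →₀ ℕ := ∑ j, Finsupp.single (χ (ω j)) 1

theorem prod_X_classCount (χ : α → σ) (ω : ι → α) :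
    ∏ j, (X (χ (ω j)) : MvPolynomial σ ℕ) = monomial (classCount χ ω) 1 := by
  simp only [classCount, monomial_sum_one, X]

theorem classCount_apply [DecidableEq σ] (χ : α → σ) (ω : ι → α) (i : σ) :
    classCount χ ω i = #{j | χ (ω j) = i} := by
  simp [classCount, Finsupp.finsetSum_apply, Finsupp.single_apply]

variable [Fintype α] [DecidableEq ι]

theorem sum_X_pow_card (χ : α → σ) :
    (∑ a, X (χ a) : MvPolynomial σ ℕ) ^ Fintype.card ι =
      ∑ ω : ι → α, monomial (classCount χ ω) 1 := by
  rw [← Finset.card_univ, ← Finset.prod_const, Finset.prod_univ_sum]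
  simp only [Fintype.piFinset_univ, prod_X_classCount]

variable [DecidableEq σ]

theorem card_classCount_eq [Fintype σ] (χ : α → σ) (k : σ →₀ ℕ)
    (hk : k.sum (fun _ m => m) = Fintype.card ι) :
    #{ω : ι → α | classCount χ ω = k} =
      k.multinomial * k.prod (fun i m => #{a | χ a = i} ^ m) := by
  have hfib : (∑ a, X (χ a) : MvPolynomial σ ℕ) = ∑ i, #{a | χ a = i} • X i := by
    rw [← Finset.sum_fiberwise Finset.univ χ]
    refine Finset.sum_congr rfl fun i _ => ?_
    rw [← Finset.sum_const]
    exact Finset.sum_congr rfl fun a ha => by rw [(Finset.mem_filter.mp ha).2]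
  have := coeff_linearCombination_X_pow_of_fintype (R := ℕ) (fun i => #{a | χ a = i}) k
    (Fintype.card ι)
  rw [← hfib, sum_X_pow_card, if_pos hk, coeff_sum] at this
  simpa [coeff_monomial, Finset.sum_boole] using this

theorem card_words_eq_multinomial [Fintype σ] [DecidableEq α] (𝒦 : σ → Finset α)
    (hdisj : Pairwise (Disjoint on 𝒦)) (hcover : ∀ a, ∃ i, a ∈ 𝒦 i) (k : σ → ℕ)
    (hk : ∑ i, k i = Fintype.card ι) :
    #{ω : ι → α | ∀ i, #{j | ω j ∈ 𝒦 i} = k i} =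
      Nat.multinomial univ k * ∏ i, #(𝒦 i) ^ k i := by
  obtain ⟨χ, hχ⟩ := exists_eq_iff_mem_of_pairwise_disjoint 𝒦 hdisj hcover
  have hclass (ω : ι → α) (i : σ) : #{j | ω j ∈ 𝒦 i} = classCount χ ω i := by
    simp only [classCount_apply, hχ]
  have hsize (i : σ) : #{a | χ a = i} = #(𝒦 i) := by
    simp only [hχ, Finset.filter_mem_eq_inter, Finset.univ_inter]
  let k' : σ →₀ ℕ := Finsupp.equivFunOnFinite.symm k
  have hk' : k'.sum (fun _ m => m) = Fintype.card ι := by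
    rw [Finsupp.sum_fintype _ _ fun _ => rfl]
    exact hk
  calc #{ω : ι → α | ∀ i, #{j | ω j ∈ 𝒦 i} = k i}
      = #{ω : ι → α | classCount χ ω = k'} := by
        simp only [hclass, Finsupp.ext_iff]
        rfl
    _ = _ := by
        rw [card_classCount_eq χ k' hk', Finsupp.multinomial_eq_of_support_subset
          (Finset.subset_univ _), Finsupp.prod_fintype _ _ fun _ => pow_zero _]
        simp only [hsize]
        rfl

end Counting

theorem epsStirling_eq_log_stirlingSeq_sub {n : ℕ} (hn : n ≠ 0) :
    epsStirling n = log (Stirling.stirlingSeq n) - log √π := by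
  have hn0 : (0 : ℝ) < n := by positivity
  rw [Stirling.log_stirlingSeq_formula, epsStirling,
    show 2 * π * (n : ℝ) = π * (2 * n) by ring, sqrt_mul pi_pos.le,
    log_mul (by positivity) (by positivity), log_sqrt (by positivity), log_sqrt (by positivity),
    log_div hn0.ne' (exp_pos 1).ne', log_exp]
  ring

theorem tendsto_epsStirling : Tendsto epsStirling atTop (𝓝 0) := by
  have hlog := ((continuousAt_log (sqrt_pos.mpr pi_pos).ne').tendsto.comp
    Stirling.tendsto_stirlingSeq_sqrt_pi).sub_const (log √π)
  rw [sub_self] at hlog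
  refine hlog.congr' ?_
  filter_upwards [eventually_ne_atTop 0] with n hn
  exact (epsStirling_eq_log_stirlingSeq_sub hn).symm

theorem abs_epsStirling_le (n : ℕ) : |epsStirling n| ≤ Econst :=
  le_ciSup tendsto_epsStirling.abs.isBoundedUnder_le.bddAbove_range n

theorem one_le_two_pi_mul {n : ℕ} (hn : n ≠ 0) : 1 ≤ 2 * π * n := by
  have : (1 : ℝ) ≤ n := Nat.one_le_cast.mpr (Nat.pos_of_ne_zero hn)
  nlinarith [pi_gt_three]

theorem monotone_log_sqrt_two_pi_mul : Monotone fun n : ℕ => log √(2 * π * n) := by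
  intro j n hjn
  rcases eq_or_ne j 0 with rfl | hj
  · rcases eq_or_ne n 0 with rfl | hn
    · rfl
    · simpa using log_nonneg (one_le_sqrt.mpr (one_le_two_pi_mul hn))
  · exact log_le_log (by positivity) (sqrt_le_sqrt (by gcongr))

theorem tendsto_log_sqrt_two_pi_mul_div :
    Tendsto (fun n : ℕ => log √(2 * π * n) / n) atTop (𝓝 0) := by
  have h := (tendsto_pow_log_div_mul_add_atTop (1 / (2 * π)) 0 1 (by positivity)).comp
    (tendsto_id.const_mul_atTop (by positivity : (0 : ℝ) < 2 * π))
  have h' := (h.comp tendsto_natCast_atTop_atTop).div_const 2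
  rw [zero_div] at h'
  refine h'.congr fun n => ?_
  simp only [comp_apply, id, pow_one, add_zero]
  rw [log_sqrt (by positivity)]
  field_simp

def stirlingCorrection (n : ℕ) : ℝ := log √(2 * π * n) + epsStirling n

theorem log_factorial_eq (n : ℕ) : log n ! = n * log n - n + stirlingCorrection n := by
  rw [stirlingCorrection, epsStirling]
  ring

theorem abs_stirlingCorrection_le {j n : ℕ} (h : j ≤ n) :
    |stirlingCorrection j| ≤ log √(2 * π * n) + Econst := by
  have hnonneg : 0 ≤ log √(2 * π * j) := by
    simpa using monotone_log_sqrt_two_pi_mul (Nat.zero_le j)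
  refine (abs_add_le _ _).trans (add_le_add ?_ (abs_epsStirling_le j))
  rw [abs_of_nonneg hnonneg]
  exact monotone_log_sqrt_two_pi_mul h

theorem log_multinomial_eq {σ : Type*} [Fintype σ] (k : σ → ℕ) :
    log (Nat.multinomial univ k) = log (∑ i, k i)! - ∑ i, log (k i)! := by
  have h := congrArg (fun x : ℕ => log x) (Nat.multinomial_spec univ k)
  simp only [Nat.cast_mul, Nat.cast_prod] at h
  rw [log_mul (prod_ne_zero_iff.mpr fun i _ => by positivity)
      (Nat.cast_ne_zero.mpr (Nat.multinomial_pos _ _).ne'),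
    log_prod fun i _ => by positivity] at h
  linarith

theorem log_multinomial_eq_entropy_add {σ : Type*} [Fintype σ] {k : σ → ℕ} {n : ℕ}
    (hk : ∑ i, k i = n) :
    log (Nat.multinomial univ k) = n * log n - ∑ i, k i * log (k i) +
      stirlingCorrection n - ∑ i, stirlingCorrection (k i) := by
  simp only [log_multinomial_eq, hk, log_factorial_eq, sum_add_distrib, sum_sub_distrib]
  rw [← Nat.cast_sum, hk]
  ring

theorem mul_neg_mul_log_div_eq {n p c k : ℝ} (hn : 0 < n) (hc : 0 < c) (hk : n * p = k) :
    n * -(p * log (p / c)) = k * log n - k * log k + k * log c := by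
  obtain rfl : p = k / n := by rw [← hk]; field_simp
  rcases eq_or_ne k 0 with rfl | hk0
  · simp
  · rw [div_div, log_div hk0 (mul_pos hn hc).ne', log_mul hn.ne' hc.ne']
    field_simp
    ring

section Partition
variable {K m n : ℕ} {𝒦 : Fin m → Finset (Fin K)} {p : Fin m → ℝ} {k : Fin m → ℕ}

theorem aKpn_eq_multinomial_mul (hdisj : Pairwise (Disjoint on 𝒦))
    (hcover : ∀ a, ∃ i, a ∈ 𝒦 i) (hk : ∀ i, n * p i = k i) (hsum : ∑ i, k i = n) :
    aKpn 𝒦 n p = Nat.multinomial univ k * ∏ i, #(𝒦 i) ^ k i := by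
  rw [aKpn, Nat.card_eq_fintype_card, Fintype.card_subtype]
  simp only [Set.mem_ofPred_eq, hk, Nat.cast_inj]
  -- the two sides differ only in the decidability instances of their filters
  convert card_words_eq_multinomial 𝒦 hdisj hcover k (by rw [hsum, Fintype.card_fin])

theorem log_aKpn_eq (hne : ∀ i, (𝒦 i).Nonempty) (hdisj : Pairwise (Disjoint on 𝒦))
    (hcover : ∀ a, ∃ i, a ∈ 𝒦 i) (hk : ∀ i, n * p i = k i) (hsum : ∑ i, k i = n) :
    log (aKpn 𝒦 n p) = log (Nat.multinomial univ k) + ∑ i, k i * log #(𝒦 i) := by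
  have hcard (i : Fin m) : (#(𝒦 i) : ℝ) ≠ 0 := Nat.cast_ne_zero.mpr (hne i).card_pos.ne'
  rw [aKpn_eq_multinomial_mul hdisj hcover hk hsum, Nat.cast_mul, Nat.cast_prod,
    prod_congr rfl fun i _ => Nat.cast_pow _ _,
    log_mul (Nat.cast_ne_zero.mpr (Nat.multinomial_pos _ _).ne')
      (prod_ne_zero_iff.mpr fun i _ => pow_ne_zero _ (hcard i)),
    log_prod fun i _ => pow_ne_zero _ (hcard i)]
  simp only [log_pow]

theorem mul_fK_eq (hne : ∀ i, (𝒦 i).Nonempty) (hn : n ≠ 0) (hk : ∀ i, n * p i = k i)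
    (hsum : ∑ i, k i = n) :
    n * fK 𝒦 p = n * log n - ∑ i, k i * log (k i) + ∑ i, k i * log #(𝒦 i) := by
  rw [fK, mul_sum, sum_congr rfl fun i _ => mul_neg_mul_log_div_eq (by positivity)
      (Nat.cast_pos.mpr (hne i).card_pos) (hk i),
    sum_add_distrib, sum_sub_distrib, ← sum_mul, ← Nat.cast_sum, hsum]

theorem abs_log_aKpn_sub_mul_fK_le (hne : ∀ i, (𝒦 i).Nonempty)
    (hdisj : Pairwise (Disjoint on 𝒦)) (hcover : ∀ a, ∃ i, a ∈ 𝒦 i) (hn : n ≠ 0)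
    (hk : ∀ i, n * p i = k i) (hsum : ∑ i, k i = n) :
    |log (aKpn 𝒦 n p) - n * fK 𝒦 p| ≤ (m + 1) * (log √(2 * π * n) + Econst) := by
  have hkey : log (aKpn 𝒦 n p) - n * fK 𝒦 p =
      stirlingCorrection n - ∑ i, stirlingCorrection (k i) := by
    rw [log_aKpn_eq hne hdisj hcover hk hsum, mul_fK_eq hne hn hk hsum,
      log_multinomial_eq_entropy_add hsum]
    ring
  have hk_le (i : Fin m) : k i ≤ n := hsum ▸ single_le_sum (by simp) (mem_univ i)
  rw [hkey]
  calc |stirlingCorrection n - ∑ i, stirlingCorrection (k i)|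
      ≤ |stirlingCorrection n| + ∑ i, |stirlingCorrection (k i)| :=
        (abs_sub _ _).trans (add_le_add le_rfl (abs_sum_le_sum_abs _ _))
    _ ≤ (log √(2 * π * n) + Econst) + ∑ _i : Fin m, (log √(2 * π * n) + Econst) :=
        add_le_add (abs_stirlingCorrection_le le_rfl)
          (sum_le_sum fun i _ => abs_stirlingCorrection_le (hk_le i))
    _ = (m + 1) * (log √(2 * π * n) + Econst) := by
        simp only [sum_const, card_univ, Fintype.card_fin, nsmul_eq_mul]
        ring

end Partition

theorem statement_14_general (K m : ℕ)
    (𝒦 : Fin m → Finset (Fin K)) (hne : ∀ i, (𝒦 i).Nonempty)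
    (hdisj : ∀ i j, i ≠ j → Disjoint (𝒦 i) (𝒦 j))
    (hcover : ∀ a : Fin K, ∃ i, a ∈ 𝒦 i) :
    (∀ n : ℕ, 1 ≤ n → ∀ p : Fin m → ℝ,
      (∀ i, 0 ≤ p i ∧ p i ≤ 1) → (∑ i, p i) = 1 → (∀ i, ∃ k : ℕ, (n : ℝ) * p i = k) →
      |(1 / n : ℝ) * Real.log (aKpn 𝒦 n p) - fK 𝒦 p| ≤
        (m + 1) * (Real.log (Real.sqrt (2 * π * n)) + Econst) / n) ∧
    (∀ δ : ℝ, 0 < δ → ∃ N : ℕ, ∀ n : ℕ, N ≤ n → 1 ≤ n → ∀ p : Fin m → ℝ,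
      (∀ i, 0 ≤ p i ∧ p i ≤ 1) → (∑ i, p i) = 1 → (∀ i, ∃ k : ℕ, (n : ℝ) * p i = k) →
      |(1 / n : ℝ) * Real.log (aKpn 𝒦 n p) - fK 𝒦 p| < δ) := by
  have hbound : ∀ n : ℕ, 1 ≤ n → ∀ p : Fin m → ℝ, (∑ i, p i) = 1 →
      (∀ i, ∃ k : ℕ, (n : ℝ) * p i = k) →
      |(1 / n : ℝ) * log (aKpn 𝒦 n p) - fK 𝒦 p| ≤
        (m + 1) * (log √(2 * π * n) + Econst) / n := by
    intro n hn p hpsum hpnat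
    choose k hk using hpnat
    have hn0 : (n : ℝ) ≠ 0 := by positivity
    have hsum : ∑ i, k i = n := by
      exact_mod_cast (by simp only [← hk, ← mul_sum, hpsum, mul_one] : ∑ i, (k i : ℝ) = n)
    rw [show (1 / n : ℝ) * log (aKpn 𝒦 n p) - fK 𝒦 p =
        (log (aKpn 𝒦 n p) - n * fK 𝒦 p) / n by field_simp, abs_div, Nat.abs_cast]
    gcongr
    exact abs_log_aKpn_sub_mul_fK_le hne hdisj hcover (by positivity) hk hsum
  refine ⟨fun n hn p _ => hbound n hn p, fun δ hδ => ?_⟩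
  have hlim : Tendsto (fun n : ℕ => (m + 1) * (log √(2 * π * n) / n + Econst / n))
      atTop (𝓝 0) := by
    simpa using (tendsto_log_sqrt_two_pi_mul_div.add
      (tendsto_const_div_atTop_nhds_zero_nat Econst)).const_mul ((m : ℝ) + 1)
  obtain ⟨N, hN⟩ := eventually_atTop.mp (hlim.eventually (gt_mem_nhds hδ))
  refine ⟨N, fun n hNn hn p _ hpsum hpnat => (hbound n hn p hpsum hpnat).trans_lt ?_⟩
  simpa only [mul_div_assoc, add_div] using hN n hNn

/-- Let `K ≥ 2`, `m ≥ 2`, `𝒦 = (K_0,…,K_{m−1})` a partition of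
`{0,…,K−1}` into nonempty sets and `E = sup_{n} |ε_n|` as above. Then for every
`n ≥ 1` and every `p ∈ Q_{m,n}`:
`|(1/n)·ln a_{𝒦,p,n} − f_𝒦(p)| ≤ (m+1)(ln √(2πn) + E)/n`; in particular the
left-hand side tends to `0` uniformly in `p ∈ Q_{m,n}` as `n → ∞`. -/
theorem statement_14 (K m : ℕ) (hK : 2 ≤ K) (hm : 2 ≤ m)
    (𝒦 : Fin m → Finset (Fin K)) (hne : ∀ i, (𝒦 i).Nonempty)
    (hdisj : ∀ i j, i ≠ j → Disjoint (𝒦 i) (𝒦 j))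
    (hcover : ∀ a : Fin K, ∃ i, a ∈ 𝒦 i) :
    (∀ n : ℕ, 1 ≤ n → ∀ p : Fin m → ℝ,
      (∀ i, 0 ≤ p i ∧ p i ≤ 1) → (∑ i, p i) = 1 → (∀ i, ∃ k : ℕ, (n : ℝ) * p i = k) →
      |(1 / n : ℝ) * Real.log (aKpn 𝒦 n p) - fK 𝒦 p| ≤
        (m + 1) * (Real.log (Real.sqrt (2 * π * n)) + Econst) / n) ∧
    (∀ δ : ℝ, 0 < δ → ∃ N : ℕ, ∀ n : ℕ, N ≤ n → 1 ≤ n → ∀ p : Fin m → ℝ,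
      (∀ i, 0 ≤ p i ∧ p i ≤ 1) → (∑ i, p i) = 1 → (∀ i, ∃ k : ℕ, (n : ℝ) * p i = k) →
      |(1 / n : ℝ) * Real.log (aKpn 𝒦 n p) - fK 𝒦 p| < δ) :=
  statement_14_general K m 𝒦 hne hdisj hcover

end
end

section
/- Let N ⊆ ℕ with both N and its complement N^c infinite, and write N as the disjoint union of its maximal integer intervals [t_{N,2j}, t_{N,2j+1}) ∩ ℕ, j ≥ 0, where t_{N,0} < t_{N,1} < t_{N,2} < ⋯, and set e_{N,i} = ζ_{t_{N,i+1}}(N). Then the density spectrum of N equals μ(N) = [liminf_{i→∞} e_{N,2i+1}/t_{N,2i+2}, limsup_{i→∞} e_{N,2i}/t_{N,2i+1}]. -/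
open Filter Set Topology

/-!
The ratio `ζ_n(N)/n` moves by at most `1/(n+1)` from `n` to `n+1`, so by a discrete intermediate
value argument every value between its `liminf` and its `limsup` is a limit point. Moreover it
increases along each interval `[t_{2j}, t_{2j+1})` of `N` and decreases along each gap
`[t_{2j+1}, t_{2j+2})`, so on a block `[t_{2j}, t_{2j+2})` it is largest at `t_{2j+1}`, and on
`[t_{2j+1}, t_{2j+3})` it is smallest at `t_{2j+2}`: the `limsup` and `liminf` are attained along
these subsequences.
-/

lemma Nat.exists_mem_Ico_and_not_succ {p : ℕ → Prop} {m n : ℕ} (hmn : m ≤ n) (hm : p m)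
    (hn : ¬ p n) : ∃ k ∈ Ico m n, p k ∧ ¬ p (k + 1) := by
  induction n, hmn using Nat.le_induction with
  | base => exact absurd hm hn
  | succ n hmn ih =>
    by_cases hpn : p n
    · exact ⟨n, ⟨hmn, n.lt_succ_self⟩, hpn, hn⟩
    · obtain ⟨k, ⟨hmk, hkn⟩, hk⟩ := ih hpn
      exact ⟨k, ⟨hmk, hkn.trans n.lt_succ_self⟩, hk⟩

lemma StrictMono.exists_le_lt_succ_of_le {u : ℕ → ℕ} (hu : StrictMono u) {I n : ℕ}
    (hn : u I ≤ n) : ∃ j, I ≤ j ∧ u j ≤ n ∧ n < u (j + 1) := by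
  obtain ⟨j, hj, hj'⟩ := hu.exists_between_of_tendsto_atTop hu.tendsto_atTop
    (Nat.lt_succ_of_le ((hu.monotone I.zero_le).trans hn))
  have hlt : n < u (j + 1) := hj'
  exact ⟨j, Nat.lt_succ_iff.1 (hu.lt_iff_lt.1 (hn.trans_lt hlt)), Nat.le_of_lt_succ hj, hlt⟩

namespace Filter

variable {α β γ : Type*} [ConditionallyCompleteLattice β] {f : Filter α} {g : Filter γ}
  {u : α → β} {v : γ → β}

theorem limsup_le_limsup_of_forall_mem_eventually_exists_le
    (h : ∀ s ∈ g, ∀ᶠ x in f, ∃ i ∈ s, u x ≤ v i)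
    (hu : f.IsCoboundedUnder (· ≤ ·) u := by isBoundedDefault)
    (hv : g.IsBoundedUnder (· ≤ ·) v := by isBoundedDefault) :
    limsup u f ≤ limsup v g :=
  limsSup_le_limsSup hu hv fun _ hc ↦ (h _ hc).mono fun _ ⟨_, hi, hxi⟩ ↦ hxi.trans hi

theorem liminf_le_liminf_of_forall_mem_eventually_exists_le
    (h : ∀ s ∈ g, ∀ᶠ x in f, ∃ i ∈ s, v i ≤ u x)
    (hu : f.IsCoboundedUnder (· ≥ ·) u := by isBoundedDefault)
    (hv : g.IsBoundedUnder (· ≥ ·) v := by isBoundedDefault) :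
    liminf v g ≤ liminf u f :=
  limsup_le_limsup_of_forall_mem_eventually_exists_le (β := βᵒᵈ) h hu hv

end Filter

section SlowlyVarying

variable {a : ℕ → ℝ}

theorem mapClusterPt_of_tendsto_sub_of_mem_Icc (hle : IsBoundedUnder (· ≤ ·) atTop a)
    (hge : IsBoundedUnder (· ≥ ·) atTop a)
    (hstep : Tendsto (fun n ↦ a (n + 1) - a n) atTop (𝓝 0)) {r : ℝ}
    (hr : r ∈ Icc (liminf a atTop) (limsup a atTop)) : MapClusterPt r atTop a := by
  rw [mapClusterPt_iff_frequently]
  intro s hs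
  obtain ⟨ε, hε, hball⟩ := Metric.mem_nhds_iff.1 hs
  have hmem {n : ℕ} (h1 : r - ε < a n) (h2 : a n < r + ε) : a n ∈ s :=
    hball (by rw [Metric.mem_ball, Real.dist_eq, abs_sub_lt_iff]; constructor <;> linarith)
  rw [frequently_atTop]
  intro M
  obtain ⟨M', hM'⟩ := eventually_atTop.1 (hstep.eventually (lt_mem_nhds (neg_lt_zero.2 hε)))
  obtain ⟨n₁, hn₁, hr₁⟩ := frequently_atTop.1 (frequently_lt_of_lt_limsup hge.isCoboundedUnder_le
    ((sub_lt_self r hε).trans_le hr.2)) (max M M')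
  by_cases h₁ : a n₁ < r + ε
  · exact ⟨n₁, le_of_max_le_left hn₁, hmem hr₁ h₁⟩
  obtain ⟨n₂, hn₂, hr₂⟩ := frequently_atTop.1 (frequently_lt_of_liminf_lt
    hle.isCoboundedUnder_ge (hr.1.trans_lt (lt_add_of_pos_right r hε))) n₁
  -- the sequence leaves `[r + ε, ∞)` in steps of less than `ε`, so it lands in `(r, r + ε)`
  obtain ⟨k, ⟨hk₁, -⟩, hk, hk'⟩ :=
    Nat.exists_mem_Ico_and_not_succ (p := fun k ↦ r + ε ≤ a k) hn₂ (not_lt.1 h₁) (not_le.2 hr₂)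
  have hjump := hM' k (le_trans (le_max_right _ _) (hn₁.trans hk₁))
  exact ⟨k + 1, by omega, hmem (by linarith) (not_le.1 hk')⟩

theorem setOf_mapClusterPt_eq_Icc_of_tendsto_sub (hle : IsBoundedUnder (· ≤ ·) atTop a)
    (hge : IsBoundedUnder (· ≥ ·) atTop a)
    (hstep : Tendsto (fun n ↦ a (n + 1) - a n) atTop (𝓝 0)) :
    {r | MapClusterPt r atTop a} = Icc (liminf a atTop) (limsup a atTop) :=
  Subset.antisymm (fun _ hr ↦ ⟨hr.liminf_le hge, hr.le_limsup hle⟩)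
    fun _ ↦ mapClusterPt_of_tendsto_sub_of_mem_Icc hle hge hstep

end SlowlyVarying

namespace DensitySpectrum

noncomputable def partialDensity (N : Set ℕ) (n : ℕ) : ℝ := (N ∩ Iio n).ncard / n

variable {N : Set ℕ} {n : ℕ}

lemma ncard_inter_Iio_succ (N : Set ℕ) (n : ℕ) :
    ((N ∩ Iio (n + 1)).ncard : ℝ) = (N ∩ Iio n).ncard + N.indicator 1 n := by
  rw [Iio_add_one_eq_Iic, ← Iio_insert]
  by_cases h : n ∈ N
  · rw [inter_insert_of_mem h, ncard_insert_of_notMem (fun h' ↦ lt_irrefl n h'.2)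
      ((finite_Iio n).inter_of_right N), indicator_of_mem h]
    simp
  · rw [inter_insert_of_notMem h, indicator_of_notMem h, add_zero]

lemma ncard_inter_Iio_le (N : Set ℕ) (n : ℕ) : (N ∩ Iio n).ncard ≤ n :=
  (ncard_le_ncard inter_subset_right (finite_Iio n)).trans_eq (ncard_Iio_nat n)

lemma partialDensity_nonneg : 0 ≤ partialDensity N n := by
  unfold partialDensity; positivity

lemma partialDensity_le_one : partialDensity N n ≤ 1 :=
  div_le_one_of_le₀ (by exact_mod_cast ncard_inter_Iio_le N n) n.cast_nonneg

lemma partialDensity_mul_self : partialDensity N n * n = (N ∩ Iio n).ncard := by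
  rcases eq_or_ne n 0 with rfl | hn
  · simp
  · exact div_mul_cancel₀ _ (Nat.cast_ne_zero.2 hn)

lemma partialDensity_succ_sub :
    partialDensity N (n + 1) - partialDensity N n =
      (N.indicator 1 n - partialDensity N n) / (n + 1) := by
  rw [partialDensity, ncard_inter_Iio_succ, ← partialDensity_mul_self]
  push_cast
  field_simp
  ring

lemma partialDensity_le_succ_of_mem (h : n ∈ N) :
    partialDensity N n ≤ partialDensity N (n + 1) := by
  rw [← sub_nonneg, partialDensity_succ_sub, indicator_of_mem h, Pi.one_apply]
  exact div_nonneg (sub_nonneg.2 partialDensity_le_one) (by positivity)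

lemma partialDensity_succ_le_of_notMem (h : n ∉ N) :
    partialDensity N (n + 1) ≤ partialDensity N n := by
  rw [← sub_nonpos, partialDensity_succ_sub, indicator_of_notMem h, zero_sub]
  exact div_nonpos_of_nonpos_of_nonneg (neg_nonpos.2 partialDensity_nonneg) (by positivity)

lemma abs_partialDensity_succ_sub_le :
    |partialDensity N (n + 1) - partialDensity N n| ≤ 1 / (n + 1) := by
  have hind : N.indicator 1 n ∈ Icc (0 : ℝ) 1 := by
    by_cases h : n ∈ N <;> simp [h]
  rw [partialDensity_succ_sub, abs_div, abs_of_pos (n.cast_add_one_pos (α := ℝ))]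
  gcongr
  exact abs_sub_le_iff.2 ⟨by linarith [hind.2, @partialDensity_nonneg N n],
    by linarith [hind.1, @partialDensity_le_one N n]⟩

lemma tendsto_partialDensity_succ_sub (N : Set ℕ) :
    Tendsto (fun n ↦ partialDensity N (n + 1) - partialDensity N n) atTop (𝓝 0) :=
  squeeze_zero_norm (fun _ ↦ abs_partialDensity_succ_sub_le)
    tendsto_one_div_add_atTop_nhds_zero_nat

lemma isBoundedUnder_le_partialDensity (l : Filter ℕ) :
    l.IsBoundedUnder (· ≤ ·) (partialDensity N) :=
  isBoundedUnder_of ⟨1, fun _ ↦ partialDensity_le_one⟩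

lemma isBoundedUnder_ge_partialDensity (l : Filter ℕ) :
    l.IsBoundedUnder (· ≥ ·) (partialDensity N) :=
  isBoundedUnder_of ⟨0, fun _ ↦ partialDensity_nonneg⟩

lemma partialDensity_monotoneOn {m n : ℕ} (h : Ico m n ⊆ N) :
    MonotoneOn (partialDensity N) (Icc m n) :=
  monotoneOn_of_le_add_one ordConnected_Icc fun _ _ hk hk' ↦
    partialDensity_le_succ_of_mem (h ⟨hk.1, hk'.2⟩)

lemma partialDensity_antitoneOn {m n : ℕ} (h : Ico m n ⊆ Nᶜ) :
    AntitoneOn (partialDensity N) (Icc m n) :=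
  antitoneOn_of_add_one_le ordConnected_Icc fun _ _ hk hk' ↦
    partialDensity_succ_le_of_notMem (h ⟨hk.1, hk'.2⟩)

def blockUnion (t : ℕ → ℕ) : Set ℕ := {n | ∃ j, t (2 * j) ≤ n ∧ n < t (2 * j + 1)}

variable {t : ℕ → ℕ}

lemma Ico_subset_blockUnion (j : ℕ) : Ico (t (2 * j)) (t (2 * j + 1)) ⊆ blockUnion t :=
  fun _ hn ↦ ⟨j, hn⟩

lemma Ico_subset_compl_blockUnion (ht : StrictMono t) (j : ℕ) :
    Ico (t (2 * j + 1)) (t (2 * j + 2)) ⊆ (blockUnion t)ᶜ := by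
  rintro n ⟨h₁, h₂⟩ ⟨i, hi₁, hi₂⟩
  have := ht.lt_iff_lt.1 (hi₁.trans_lt h₂)
  have := ht.lt_iff_lt.1 (h₁.trans_lt hi₂)
  omega

lemma partialDensity_le_peak (ht : StrictMono t) {j n : ℕ} (h₁ : t (2 * j) ≤ n)
    (h₂ : n < t (2 * j + 2)) :
    partialDensity (blockUnion t) n ≤ partialDensity (blockUnion t) (t (2 * j + 1)) := by
  rcases le_total n (t (2 * j + 1)) with h | h
  · exact partialDensity_monotoneOn (Ico_subset_blockUnion j) ⟨h₁, h⟩ ⟨h₁.trans h, le_rfl⟩ h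
  · exact partialDensity_antitoneOn (Ico_subset_compl_blockUnion ht j)
      ⟨le_rfl, (ht (by omega)).le⟩ ⟨h, h₂.le⟩ h

lemma trough_le_partialDensity (ht : StrictMono t) {j n : ℕ} (h₁ : t (2 * j + 1) ≤ n)
    (h₂ : n < t (2 * j + 3)) :
    partialDensity (blockUnion t) (t (2 * j + 2)) ≤ partialDensity (blockUnion t) n := by
  rcases le_total n (t (2 * j + 2)) with h | h
  · exact partialDensity_antitoneOn (Ico_subset_compl_blockUnion ht j)
      ⟨h₁, h⟩ ⟨h₁.trans h, le_rfl⟩ h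
  · exact partialDensity_monotoneOn (Ico_subset_blockUnion (j + 1))
      ⟨le_rfl, (ht (by omega)).le⟩ ⟨h, h₂.le⟩ h

theorem limsup_partialDensity_blockUnion (ht : StrictMono t) :
    limsup (partialDensity (blockUnion t)) atTop =
      limsup (fun i ↦ partialDensity (blockUnion t) (t (2 * i + 1))) atTop := by
  have hodd : StrictMono fun i ↦ t (2 * i + 1) := ht.comp fun _ _ h ↦ by omega
  have heven : StrictMono fun i ↦ t (2 * i) := ht.comp fun _ _ h ↦ by omega
  refine le_antisymm (limsup_le_limsup_of_forall_mem_eventually_exists_le ?_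
    (isBoundedUnder_ge_partialDensity _).isCoboundedUnder_le
    (isBoundedUnder_of ⟨1, fun _ ↦ partialDensity_le_one⟩))
    (hodd.tendsto_atTop.limsup_comp_le_limsup
      (isBoundedUnder_ge_partialDensity _).isCoboundedUnder_le
      (isBoundedUnder_le_partialDensity _))
  intro s hs
  obtain ⟨I, hI⟩ := mem_atTop_sets.1 hs
  filter_upwards [eventually_ge_atTop (t (2 * I))] with n hn
  obtain ⟨j, hIj, h₁, h₂⟩ := heven.exists_le_lt_succ_of_le hn
  exact ⟨j, hI j hIj, partialDensity_le_peak ht h₁ h₂⟩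

theorem liminf_partialDensity_blockUnion (ht : StrictMono t) :
    liminf (partialDensity (blockUnion t)) atTop =
      liminf (fun i ↦ partialDensity (blockUnion t) (t (2 * i + 2))) atTop := by
  have heven : StrictMono fun i ↦ t (2 * i + 2) := ht.comp fun _ _ h ↦ by omega
  have hodd : StrictMono fun i ↦ t (2 * i + 1) := ht.comp fun _ _ h ↦ by omega
  refine le_antisymm (heven.tendsto_atTop.liminf_le_liminf_comp
      (isBoundedUnder_le_partialDensity _).isCoboundedUnder_ge
      (isBoundedUnder_ge_partialDensity _))
    (liminf_le_liminf_of_forall_mem_eventually_exists_le ?_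
      (isBoundedUnder_le_partialDensity _).isCoboundedUnder_ge
      (isBoundedUnder_of ⟨0, fun _ ↦ partialDensity_nonneg⟩))
  intro s hs
  obtain ⟨I, hI⟩ := mem_atTop_sets.1 hs
  filter_upwards [eventually_ge_atTop (t (2 * I + 1))] with n hn
  obtain ⟨j, hIj, h₁, h₂⟩ := hodd.exists_le_lt_succ_of_le hn
  exact ⟨j, hI j hIj, trough_le_partialDensity ht h₁ h₂⟩

end DensitySpectrum

open DensitySpectrum in
theorem statement_16_general (N : Set ℕ)
    (t : ℕ → ℕ) (ht : StrictMono t)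
    (hrep : N = {n | ∃ j : ℕ, t (2 * j) ≤ n ∧ n < t (2 * j + 1)}) :
    {r : ℝ | MapClusterPt r atTop
        (fun n : ℕ => ((N ∩ Set.Iio n).ncard : ℝ) / n)} =
      Set.Icc
        (liminf (fun i : ℕ =>
          ((N ∩ Set.Iio (t (2 * i + 2))).ncard : ℝ) / t (2 * i + 2)) atTop)
        (limsup (fun i : ℕ =>
          ((N ∩ Set.Iio (t (2 * i + 1))).ncard : ℝ) / t (2 * i + 1)) atTop) := by
  subst hrep
  have h := setOf_mapClusterPt_eq_Icc_of_tendsto_sub (isBoundedUnder_le_partialDensity _)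
    (isBoundedUnder_ge_partialDensity _) (tendsto_partialDensity_succ_sub (blockUnion t))
  rwa [liminf_partialDensity_blockUnion ht, limsup_partialDensity_blockUnion ht] at h

/-- Let `N ⊆ ℕ` with `N` and `Nᶜ` both infinite, written as the
disjoint union of its maximal integer intervals `[t_{2j}, t_{2j+1}) ∩ ℕ` where
`t_0 < t_1 < t_2 < ⋯`. With `ζ_n(N) = #(N ∩ [0,n))` and `e_{N,i} = ζ_{t_{i+1}}(N)`,
the density spectrum of `N` (the set of limit points of `(ζ_n(N)/n)_n`) equals
`[liminf_i e_{N,2i+1}/t_{2i+2}, limsup_i e_{N,2i}/t_{2i+1}]`. -/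
theorem statement_16 (N : Set ℕ) (hNinf : N.Infinite) (hNcinf : Nᶜ.Infinite)
    (t : ℕ → ℕ) (ht : StrictMono t)
    (hrep : N = {n | ∃ j : ℕ, t (2 * j) ≤ n ∧ n < t (2 * j + 1)}) :
    {r : ℝ | MapClusterPt r atTop
        (fun n : ℕ => ((N ∩ Set.Iio n).ncard : ℝ) / n)} =
      Set.Icc
        (liminf (fun i : ℕ =>
          ((N ∩ Set.Iio (t (2 * i + 2))).ncard : ℝ) / t (2 * i + 2)) atTop)
        (limsup (fun i : ℕ =>
          ((N ∩ Set.Iio (t (2 * i + 1))).ncard : ℝ) / t (2 * i + 1)) atTop) :=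
  statement_16_general N t ht hrep
end
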